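/- arXiv:math/0104238 — 6 statements merged into one kernel-verified Lean document; each statement's English description precedes it below -/
import Mathlib

section
/- Let φ : ℤ₊ → (0,∞), let x₀ ∈ ℝ, and let V = ⋃_{n≥1} V_n where V_n ⊂ V_{n+1} are sets of entire functions on ℂ; for f ∈ V let deg(f) be the least n with f ∈ V_n. Suppose that for all 0 < R₁ ≤ R₂ there is a constant C(R₁,R₂) ≥ 1 such that every nonzero f ∈ V satisfies max_{|z−x₀|≤R₂} |f(z)| ≤ C(R₁,R₂)^{φ(deg f)} · max_{|z−x₀|≤R₁} |f(z)| (maxima over complex disks centred at x₀). Then for all 0 < R₁ ≤ R₂ there is a constant C′(R₁,R₂) ≥ 1 such that every nonzero f ∈ V satisfies max_{|z−x₀|≤R₂} |f(z)| ≤ C′(R₁,R₂)^{φ(deg f)} · max_{x ∈ [x₀−R₁, x₀+R₁]} |f(x)|, where the last maximum is over the real segment of radius R₁ centred at x₀. -/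
/-- The degree of a function `f` relative to an increasing family `V` of sets of
functions: the least `n ≥ 1` with `f ∈ V n`. -/
noncomputable def degV (V : ℕ → Set (ℂ → ℂ)) (f : ℂ → ℂ) : ℕ :=
  sInf {n : ℕ | 1 ≤ n ∧ f ∈ V n}

/-!
Write `M_B(R)` and `M_I(R)` for the maxima of `|f|` on the disc and on the segment of radius `R`
about `x₀`. Hadamard's three-lines theorem, applied to `s ↦ f (x₀ + R cosh s)` on the strip
`0 ≤ Re s ≤ 2 log 3`, gives the two-constants estimate
`M_B(R)² ≤ M_I(R) · M_B(R cosh (2 log 3))`: `cosh` maps the imaginary axis onto `[-1, 1]`, the strip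
into the disc of radius `cosh (2 log 3)`, and (inverting the Joukowski map) every point of the
unit disc is `cosh z` with `0 ≤ Re z ≤ log 3`, i.e. on the left half of the strip, where the
interpolation exponent is at most `1/2`. Bounding `M_B(R₁ cosh (2 log 3))` by the hypothesis
gives `M_B(R₁) ≤ C^φ M_I(R₁)`, so `C' = C²` works.
-/

open Complex Metric Set

theorem rpow_one_sub_mul_rpow_le_sqrt_mul {a b t : ℝ} (ha : 0 ≤ a) (hab : a ≤ b)
    (ht : t ≤ 1 / 2) : a ^ (1 - t) * b ^ t ≤ √(a * b) := by
  have hb : 0 ≤ b := ha.trans hab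
  calc a ^ (1 - t) * b ^ t = a ^ (1 / 2 : ℝ) * a ^ (1 / 2 - t) * b ^ t := by
        rw [← Real.rpow_add' ha (by linarith)]; ring_nf
    _ ≤ a ^ (1 / 2 : ℝ) * b ^ (1 / 2 - t) * b ^ t := by gcongr
    _ = √(a * b) := by
        rw [mul_assoc, ← Real.rpow_add' hb (by norm_num), Real.sqrt_mul ha, Real.sqrt_eq_rpow,
          Real.sqrt_eq_rpow, sub_add_cancel]

theorem Complex.exists_add_inv_eq_two_mul {w : ℂ} (hw : ‖w‖ ≤ 1) :
    ∃ u : ℂ, 1 ≤ ‖u‖ ∧ ‖u‖ ≤ 3 ∧ u + u⁻¹ = 2 * w := by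
  obtain ⟨d, hd⟩ := IsAlgClosed.exists_eq_mul_self (w ^ 2 - 1)
  have hd₂ : ‖d‖ ≤ 2 := by
    have : ‖d‖ ^ 2 ≤ 2 := by
      calc ‖d‖ ^ 2 = ‖w ^ 2 - 1‖ := by rw [hd, norm_mul, sq]
        _ ≤ ‖w‖ ^ 2 + 1 := (norm_sub_le _ _).trans_eq (by rw [norm_pow, norm_one])
        _ ≤ 2 := by nlinarith [norm_nonneg w]
    nlinarith [norm_nonneg d]
  have hmul : (w + d) * (w - d) = 1 := by linear_combination hd
  have hnorm : ‖w + d‖ * ‖w - d‖ = 1 := by rw [← norm_mul, hmul, norm_one]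
  by_cases h : 1 ≤ ‖w + d‖
  · refine ⟨w + d, h, (norm_add_le w d).trans (by linarith), ?_⟩
    rw [inv_eq_of_mul_eq_one_right hmul]; ring
  · refine ⟨w - d, by nlinarith [norm_nonneg (w + d)], (norm_sub_le w d).trans (by linarith), ?_⟩
    rw [inv_eq_of_mul_eq_one_left hmul]; ring

theorem Complex.exists_cosh_eq {w : ℂ} (hw : ‖w‖ ≤ 1) :
    ∃ z : ℂ, 0 ≤ z.re ∧ z.re ≤ Real.log 3 ∧ cosh z = w := by
  obtain ⟨u, hu₁, hu₃, hu⟩ := exists_add_inv_eq_two_mul hw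
  have hu₀ : u ≠ 0 := norm_pos_iff.mp (by linarith)
  refine ⟨log u, ?_, ?_, ?_⟩
  · rw [log_re]; exact Real.log_nonneg hu₁
  · rw [log_re]; exact Real.log_le_log (by linarith) hu₃
  · rw [cosh, exp_neg, exp_log hu₀, hu]; ring

theorem Complex.norm_cosh_le (z : ℂ) : ‖cosh z‖ ≤ Real.cosh z.re := by
  rw [cosh, Real.cosh_eq, norm_div, Complex.norm_two]
  gcongr
  calc ‖exp z + exp (-z)‖ ≤ ‖exp z‖ + ‖exp (-z)‖ := norm_add_le _ _
    _ = Real.exp z.re + Real.exp (-z.re) := by rw [norm_exp, norm_exp, neg_re]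

theorem add_mul_cosh_mem_closedBall {x₀ R r : ℝ} (hR : 0 ≤ R) {s : ℂ} (hs : |s.re| ≤ r) :
    (x₀ : ℂ) + R * cosh s ∈ closedBall (x₀ : ℂ) (R * Real.cosh r) := by
  rw [mem_closedBall, dist_eq, add_sub_cancel_left, norm_mul, norm_real,
    Real.norm_of_nonneg hR]
  gcongr
  exact (norm_cosh_le s).trans (Real.cosh_le_cosh.mpr (hs.trans (le_abs_self r)))

theorem exists_add_mul_cosh_eq_ofReal {x₀ R : ℝ} (hR : 0 ≤ R) {s : ℂ} (hs : s.re = 0) :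
    ∃ x ∈ Icc (x₀ - R) (x₀ + R), (x₀ : ℂ) + R * cosh s = x := by
  refine ⟨x₀ + R * Real.cos s.im, ?_, ?_⟩
  · constructor <;> nlinarith [Real.neg_one_le_cos s.im, Real.cos_le_one s.im]
  · conv_lhs => rw [← re_add_im s, hs, ofReal_zero, zero_add, cosh_mul_I]
    push_cast; ring

open HadamardThreeLines in
theorem norm_le_sqrt_mul_of_segment_of_closedBall {f : ℂ → ℂ} (hf : Differentiable ℂ f)
    {x₀ R a b : ℝ} (hR : 0 < R) (hab : a ≤ b)
    (hseg : ∀ x ∈ Icc (x₀ - R) (x₀ + R), ‖f x‖ ≤ a)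
    (hball : ∀ z ∈ closedBall (x₀ : ℂ) (R * Real.cosh (2 * Real.log 3)), ‖f z‖ ≤ b)
    {w : ℂ} (hw : w ∈ closedBall (x₀ : ℂ) R) : ‖f w‖ ≤ √(a * b) := by
  have ha : 0 ≤ a := (norm_nonneg _).trans (hseg x₀ ⟨by linarith, by linarith⟩)
  set g : ℂ → ℂ := fun s => f (x₀ + R * cosh s)
  have hwR : ‖(w - x₀) / R‖ ≤ 1 := by
    rw [norm_div, norm_real, Real.norm_of_nonneg hR.le, div_le_one hR]
    rwa [mem_closedBall, dist_eq] at hw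
  obtain ⟨z, hz₀, hz₁, hz⟩ := exists_cosh_eq hwR
  have hgz : g z = f w := by
    simp only [g, hz, mul_div_cancel₀ _ (ofReal_ne_zero.mpr hR.ne'), add_sub_cancel]
  have hg_strip : ∀ s ∈ verticalClosedStrip 0 (2 * Real.log 3), ‖g s‖ ≤ b := fun s hs =>
    hball _ (add_mul_cosh_mem_closedBall hR.le (abs_le.mpr ⟨by linarith [hs.1], hs.2⟩))
  have hinterp := norm_le_interp_of_mem_verticalClosedStrip' (f := g) (by positivity)
    (show z ∈ verticalClosedStrip 0 (2 * Real.log 3) from ⟨hz₀, by linarith⟩)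
    (hf.comp (by fun_prop)).diffContOnCl
    ⟨b, forall_mem_image.mpr hg_strip⟩
    (fun s hs => by
      obtain ⟨x, hx, hsx⟩ := exists_add_mul_cosh_eq_ofReal (x₀ := x₀) hR.le hs
      simpa only [g, hsx] using hseg x hx)
    (fun s hs => hg_strip s ⟨(by positivity : (0 : ℝ) ≤ 2 * Real.log 3).trans_eq hs.symm, hs.le⟩)
  rw [hgz, sub_zero, sub_zero] at hinterp
  refine hinterp.trans (rpow_one_sub_mul_rpow_le_sqrt_mul ha hab ?_)
  rw [div_le_iff₀ (by positivity)]
  linarith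

theorem IsCompact.norm_le_sSup_image_norm {X E : Type*} [TopologicalSpace X]
    [SeminormedAddCommGroup E] {f : X → E} {K : Set X} (hK : IsCompact K) (hf : ContinuousOn f K)
    {x : X} (hx : x ∈ K) : ‖f x‖ ≤ sSup ((fun y => ‖f y‖) '' K) :=
  le_csSup (hK.bddAbove_image hf.norm) (mem_image_of_mem _ hx)

theorem sSup_image_norm_nonneg {X E : Type*} [SeminormedAddCommGroup E] (f : X → E) (K : Set X) :
    0 ≤ sSup ((fun x => ‖f x‖) '' K) :=
  Real.sSup_nonneg (forall_mem_image.mpr fun _ _ => norm_nonneg _)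

theorem sSup_norm_closedBall_sq_le {f : ℂ → ℂ} (hf : Differentiable ℂ f) {x₀ R : ℝ} (hR : 0 < R) :
    sSup ((fun w => ‖f w‖) '' closedBall (x₀ : ℂ) R) ^ 2 ≤
      sSup ((fun x : ℝ => ‖f x‖) '' Icc (x₀ - R) (x₀ + R)) *
        sSup ((fun w => ‖f w‖) '' closedBall (x₀ : ℂ) (R * Real.cosh (2 * Real.log 3))) := by
  set a := sSup ((fun x : ℝ => ‖f x‖) '' Icc (x₀ - R) (x₀ + R))
  set b := sSup ((fun w => ‖f w‖) '' closedBall (x₀ : ℂ) (R * Real.cosh (2 * Real.log 3)))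
  set M := sSup ((fun w => ‖f w‖) '' closedBall (x₀ : ℂ) R)
  have hseg : ∀ x ∈ Icc (x₀ - R) (x₀ + R), ‖f x‖ ≤ a := fun x hx =>
    isCompact_Icc.norm_le_sSup_image_norm (hf.continuous.comp continuous_ofReal).continuousOn hx
  have hball : ∀ z ∈ closedBall (x₀ : ℂ) (R * Real.cosh (2 * Real.log 3)), ‖f z‖ ≤ b :=
    fun z hz => (isCompact_closedBall _ _).norm_le_sSup_image_norm hf.continuous.continuousOn hz
  have hab : a ≤ b := by
    refine csSup_le ((nonempty_Icc.mpr (by linarith)).image _) (forall_mem_image.mpr fun x hx => ?_)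
    refine hball x ?_
    rw [mem_closedBall, isometry_ofReal.dist_eq, ← mem_closedBall, Real.closedBall_eq_Icc]
    exact Icc_subset_Icc (by nlinarith [Real.one_le_cosh (2 * Real.log 3)])
      (by nlinarith [Real.one_le_cosh (2 * Real.log 3)]) hx
  have ha : 0 ≤ a := sSup_image_norm_nonneg _ _
  have hM : M ≤ √(a * b) := csSup_le ((nonempty_closedBall.mpr hR.le).image _)
    (forall_mem_image.mpr fun _ hw =>
      norm_le_sqrt_mul_of_segment_of_closedBall hf hR hab hseg hball hw)
  have hM₀ : 0 ≤ M := sSup_image_norm_nonneg _ _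
  calc M ^ 2 ≤ √(a * b) ^ 2 := by gcongr
    _ = a * b := Real.sq_sqrt (mul_nonneg ha (ha.trans hab))

theorem siciak_disk_to_segment_general (V : ℕ → Set (ℂ → ℂ))
    (hentire : ∀ n, ∀ f ∈ V n, Differentiable ℂ f)
    (φ : ℕ → ℝ) (x₀ : ℝ)
    (hyp : ∀ R₁ R₂ : ℝ, 0 < R₁ → R₁ ≤ R₂ → ∃ C : ℝ, 1 ≤ C ∧
      ∀ f : ℂ → ℂ, (∃ n, 1 ≤ n ∧ f ∈ V n) → f ≠ 0 →
        ∀ z ∈ Metric.closedBall (x₀ : ℂ) R₂,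
          ‖f z‖ ≤ C ^ φ (degV V f) *
            sSup ((fun w : ℂ => ‖f w‖) '' Metric.closedBall (x₀ : ℂ) R₁)) :
    ∀ R₁ R₂ : ℝ, 0 < R₁ → R₁ ≤ R₂ → ∃ C' : ℝ, 1 ≤ C' ∧
      ∀ f : ℂ → ℂ, (∃ n, 1 ≤ n ∧ f ∈ V n) → f ≠ 0 →
        ∀ z ∈ Metric.closedBall (x₀ : ℂ) R₂,
          ‖f z‖ ≤ C' ^ φ (degV V f) *
            sSup ((fun x : ℝ => ‖f (x : ℂ)‖) '' Set.Icc (x₀ - R₁) (x₀ + R₁)) := by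
  intro R₁ R₂ hR₁ hR₁₂
  set R₃ := R₁ * Real.cosh (2 * Real.log 3)
  obtain ⟨C, hC₁, hC⟩ := hyp R₁ (max R₂ R₃) hR₁ (le_max_of_le_left hR₁₂)
  refine ⟨C ^ 2, one_le_pow₀ hC₁, fun f hfV hf₀ z hz => ?_⟩
  have hf : Differentiable ℂ f := let ⟨n, _, hfn⟩ := hfV; hentire n f hfn
  set K := C ^ φ (degV V f)
  set MI := sSup ((fun x : ℝ => ‖f x‖) '' Icc (x₀ - R₁) (x₀ + R₁))
  set MB := sSup ((fun w => ‖f w‖) '' closedBall (x₀ : ℂ) R₁)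
  have hK : 0 ≤ K := Real.rpow_nonneg (by linarith) _
  have hM₃ : sSup ((fun w => ‖f w‖) '' closedBall (x₀ : ℂ) R₃) ≤ K * MB :=
    csSup_le ((nonempty_closedBall.mpr (by positivity)).image _) (forall_mem_image.mpr fun w hw =>
      hC f hfV hf₀ w (closedBall_subset_closedBall (le_max_right _ _) hw))
  have hMB : MB ≤ K * MI := by
    have hMI : 0 ≤ MI := sSup_image_norm_nonneg _ _
    have hMB₀ : 0 ≤ MB := sSup_image_norm_nonneg _ _
    have hsq : MB ^ 2 ≤ MI * (K * MB) :=
      (sSup_norm_closedBall_sq_le hf hR₁).trans (mul_le_mul_of_nonneg_left hM₃ hMI)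
    nlinarith [mul_nonneg hK hMI]
  calc ‖f z‖ ≤ K * MB := hC f hfV hf₀ z (closedBall_subset_closedBall (le_max_left _ _) hz)
    _ ≤ K * (K * MI) := by gcongr
    _ = (C ^ 2) ^ φ (degV V f) * MI := by
        rw [sq, Real.mul_rpow (by linarith) (by linarith), mul_assoc]

/-- If the generalized Siciak extremal function of complex disks
`B_{R₁}(x₀)` (for the family `V` of entire functions and exponent function `φ`) is
bounded on all larger disks `B_{R₂}(x₀)`, then the same holds with the disk `B_{R₁}(x₀)`
replaced by the real segment `I_{R₁}(x₀) = [x₀ - R₁, x₀ + R₁]`. -/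
theorem siciak_disk_to_segment (V : ℕ → Set (ℂ → ℂ))
    (hmono : ∀ n, V n ⊆ V (n + 1))
    (hentire : ∀ n, ∀ f ∈ V n, Differentiable ℂ f)
    (φ : ℕ → ℝ) (hφ : ∀ n, 0 < φ n) (x₀ : ℝ)
    (hyp : ∀ R₁ R₂ : ℝ, 0 < R₁ → R₁ ≤ R₂ → ∃ C : ℝ, 1 ≤ C ∧
      ∀ f : ℂ → ℂ, (∃ n, 1 ≤ n ∧ f ∈ V n) → f ≠ 0 →
        ∀ z ∈ Metric.closedBall (x₀ : ℂ) R₂,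
          ‖f z‖ ≤ C ^ φ (degV V f) *
            sSup ((fun w : ℂ => ‖f w‖) '' Metric.closedBall (x₀ : ℂ) R₁)) :
    ∀ R₁ R₂ : ℝ, 0 < R₁ → R₁ ≤ R₂ → ∃ C' : ℝ, 1 ≤ C' ∧
      ∀ f : ℂ → ℂ, (∃ n, 1 ≤ n ∧ f ∈ V n) → f ≠ 0 →
        ∀ z ∈ Metric.closedBall (x₀ : ℂ) R₂,
          ‖f z‖ ≤ C' ^ φ (degV V f) *
            sSup ((fun x : ℝ => ‖f (x : ℂ)‖) '' Set.Icc (x₀ - R₁) (x₀ + R₁)) :=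
  siciak_disk_to_segment_general V hentire φ x₀ hyp
end

section
/- Let W be a vector space of complex-valued functions, each analytic in a neighbourhood of 0, and suppose m := maxord₀(W) = sup_{0≠f∈W} ord₀(f) is finite. Then for every ε > 0 there exist r > 0 and a nonzero f ∈ W, analytic on a neighbourhood of [0,2r], such that max_{0≤x≤2r} |f(x)| ≥ (2^m − ε) · max_{0≤x≤r} |f(x)|; i.e., sup_{r>0} sup_{0≠f∈W} ( max_{0≤x≤2r}|f(x)| / max_{0≤x≤r}|f(x)| ) ≥ 2^{maxord₀(W)}. -/
/-- The order of vanishing at `0` of a function `f` (analytic near `0`): the least `m`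
with `iteratedDeriv m f 0 ≠ 0`. By the convention `sInf ∅ = 0` this gives
`ord₀(0) = 0`. -/
noncomputable def ord0 (f : ℂ → ℂ) : ℕ :=
  sInf {m : ℕ | iteratedDeriv m f 0 ≠ 0}

/-!
Pick `f ∈ W` of order `m`. If `f` vanishes near `0` (then `m = 0`) both maxima are `0` for small
`r`. Otherwise `f z = z ^ m • g z` near `0` with `g 0 ≠ 0`, so for small `r` the values `‖g x‖`,
`x ∈ [0, 2r]`, lie in an interval `[a, b]` around `‖g 0‖` with `b / a` as close to `1` as we like.
Then `max_{[0,r]} ‖f‖ ≤ r ^ m b` while `max_{[0,2r]} ‖f‖ ≥ ‖f (2r)‖ ≥ 2 ^ m r ^ m a`.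
-/

open Filter Set Topology

lemma ord0_eq_analyticOrderNatAt {f : ℂ → ℂ} (hf : AnalyticAt ℂ f 0) :
    ord0 f = analyticOrderNatAt f 0 := by
  by_cases htop : analyticOrderAt f 0 = ⊤
  · have hderiv : ∀ i, iteratedDeriv i f 0 = 0 := fun i ↦
      (natCast_le_analyticOrderAt_iff_iteratedDeriv_eq_zero hf).mp (htop ▸ le_top) i i.lt_succ_self
    simp [ord0, analyticOrderNatAt, htop, hderiv]
  · set n := analyticOrderNatAt f 0
    have hn : (n : ℕ∞) = analyticOrderAt f 0 := Nat.cast_analyticOrderNatAt htop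
    have hlt : ∀ i < n, iteratedDeriv i f 0 = 0 :=
      (natCast_le_analyticOrderAt_iff_iteratedDeriv_eq_zero hf).mp hn.le
    have hne : iteratedDeriv n f 0 ≠ 0 := fun h ↦ by
      have : ((n + 1 : ℕ) : ℕ∞) ≤ n := hn ▸
        (natCast_le_analyticOrderAt_iff_iteratedDeriv_eq_zero hf).mpr
          (Nat.forall_lt_succ_right.mpr ⟨hlt, h⟩)
      exact n.not_succ_le_self (ENat.natCast_le_natCast.mp this)
    exact le_antisymm (Nat.sInf_le hne) (le_csInf ⟨n, hne⟩ fun i hi ↦ not_lt.mp (hi ∘ hlt i))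

lemma eventually_nhdsGE_zero_ofReal {P : ℂ → Prop} (h : ∀ᶠ z in 𝓝 0, P z) :
    ∀ᶠ x : ℝ in 𝓝[≥] 0, P x :=
  ((Complex.continuous_ofReal.tendsto' 0 0 Complex.ofReal_zero).eventually h).filter_mono
    nhdsWithin_le_nhds

lemma eventually_forall_Icc_two_mul {P : ℝ → Prop} (h : ∀ᶠ x in 𝓝[≥] 0, P x) :
    ∀ᶠ r in 𝓝[>] 0, ∀ x ∈ Icc 0 (2 * r), P x := by
  obtain ⟨u, hu, hPu⟩ := mem_nhdsGE_iff_exists_Icc_subset.mp h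
  filter_upwards [Ioo_mem_nhdsGT (half_pos hu)] with r hr x hx
  exact hPu ⟨hx.1, by linarith [hx.2, hr.2]⟩

lemma pow_mul_mul_sSup_image_Icc_le {F G : ℝ → ℝ} {m : ℕ} {a b r : ℝ} (hr : 0 ≤ r) (ha : 0 ≤ a)
    (hFG : ∀ x ∈ Icc 0 (2 * r), F x = x ^ m * G x ∧ G x ∈ Icc a b) :
    2 ^ m * a * sSup (F '' Icc 0 r) ≤ b * sSup (F '' Icc 0 (2 * r)) := by
  have hr2 : 2 * r ∈ Icc 0 (2 * r) := ⟨by positivity, le_rfl⟩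
  have hb : 0 ≤ b := ha.trans ((hFG _ hr2).2.1.trans (hFG _ hr2).2.2)
  have hF_le : ∀ x ∈ Icc 0 (2 * r), F x ≤ x ^ m * b := fun x hx ↦ by
    rw [(hFG x hx).1]
    exact mul_le_mul_of_nonneg_left (hFG x hx).2.2 (pow_nonneg hx.1 m)
  have hS₁ : sSup (F '' Icc 0 r) ≤ r ^ m * b := by
    refine csSup_le (by simpa using hr) ?_
    rintro _ ⟨x, hx, rfl⟩
    have hx2 : x ∈ Icc 0 (2 * r) := ⟨hx.1, by linarith [hx.2]⟩
    exact (hF_le x hx2).trans (mul_le_mul_of_nonneg_right (pow_le_pow_left₀ hx.1 hx.2 m) hb)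
  have hS₂ : F (2 * r) ≤ sSup (F '' Icc 0 (2 * r)) := by
    refine le_csSup ⟨(2 * r) ^ m * b, ?_⟩ (mem_image_of_mem F hr2)
    rintro _ ⟨x, hx, rfl⟩
    exact (hF_le x hx).trans (mul_le_mul_of_nonneg_right (pow_le_pow_left₀ hx.1 hx.2 m) hb)
  calc 2 ^ m * a * sSup (F '' Icc 0 r) ≤ 2 ^ m * a * (r ^ m * b) := by gcongr
    _ = b * ((2 * r) ^ m * a) := by ring
    _ ≤ b * F (2 * r) := by
      rw [(hFG _ hr2).1]
      exact mul_le_mul_of_nonneg_left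
        (mul_le_mul_of_nonneg_left (hFG _ hr2).2.1 (by positivity)) hb
    _ ≤ b * sSup (F '' Icc 0 (2 * r)) := mul_le_mul_of_nonneg_left hS₂ hb

lemma eventually_doubling_of_eq_pow_mul {F G : ℝ → ℝ} {m : ℕ}
    (hFG : ∀ᶠ x in 𝓝[≥] 0, F x = x ^ m * G x) (hG : ContinuousWithinAt G (Ici 0) 0)
    (hG0 : 0 < G 0) {ε : ℝ} (hε : 0 < ε) :
    ∀ᶠ r in 𝓝[>] 0, (2 ^ m - ε) * sSup (F '' Icc 0 r) ≤ sSup (F '' Icc 0 (2 * r)) := by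
  have hsmall : ∀ᶠ t in 𝓝 0, (2 ^ m - ε) * (G 0 + t) < 2 ^ m * (G 0 - t) ∧ t < G 0 := by
    refine (ContinuousAt.eventually_lt (f := fun t ↦ (2 ^ m - ε) * (G 0 + t))
      (g := fun t ↦ 2 ^ m * (G 0 - t)) (by fun_prop) (by fun_prop) ?_).and (eventually_lt_nhds hG0)
    linarith [mul_pos hε hG0]
  obtain ⟨t, ⟨hab, hat⟩, ht⟩ : ∃ t, _ ∧ 0 < t :=
    ((hsmall.filter_mono nhdsWithin_le_nhds).and (self_mem_nhdsWithin (s := Ioi 0))).exists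
  have hGnear : ∀ᶠ x in 𝓝[≥] 0, G x ∈ Icc (G 0 - t) (G 0 + t) :=
    hG (Icc_mem_nhds (by linarith) (by linarith))
  filter_upwards [eventually_forall_Icc_two_mul (hFG.and hGnear), self_mem_nhdsWithin]
    with r hr hr0
  have ha : 0 ≤ G 0 - t := sub_nonneg.mpr hat.le
  have key := pow_mul_mul_sSup_image_Icc_le hr0.out.le ha hr
  have hS₁ : 0 ≤ sSup (F '' Icc 0 r) := by
    refine Real.sSup_nonneg ?_
    rintro _ ⟨x, hx, rfl⟩
    have hx2 := hr x ⟨hx.1, by linarith [hx.2, hr0.out]⟩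
    rw [hx2.1]
    exact mul_nonneg (pow_nonneg hx.1 m) (ha.trans hx2.2.1)
  have hb : 0 < G 0 + t := by linarith
  refine le_of_mul_le_mul_left ?_ hb
  linarith [mul_le_mul_of_nonneg_right hab.le hS₁]

lemma AnalyticAt.eventually_doubling {E : Type*} [NormedAddCommGroup E] [NormedSpace ℂ E]
    {f : ℂ → E} (hf : AnalyticAt ℂ f 0) {ε : ℝ} (hε : 0 < ε) :
    ∀ᶠ r in 𝓝[>] 0, (2 ^ analyticOrderNatAt f 0 - ε) * sSup ((fun x : ℝ ↦ ‖f x‖) '' Icc 0 r) ≤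
      sSup ((fun x : ℝ ↦ ‖f x‖) '' Icc 0 (2 * r)) := by
  by_cases htop : analyticOrderAt f 0 = ⊤
  · have hzero := eventually_forall_Icc_two_mul
      (eventually_nhdsGE_zero_ofReal (analyticOrderAt_eq_top.mp htop))
    filter_upwards [hzero, self_mem_nhdsWithin] with r hr hr0
    have hS₁ : sSup ((fun x : ℝ ↦ ‖f x‖) '' Icc 0 r) = 0 := by
      refine le_antisymm (Real.sSup_nonpos ?_) (Real.sSup_nonneg ?_) <;>
        rintro _ ⟨x, hx, rfl⟩
      · simp [hr x ⟨hx.1, by linarith [hx.2, hr0.out]⟩]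
      · positivity
    rw [hS₁, mul_zero]
    exact Real.sSup_nonneg (by rintro _ ⟨x, -, rfl⟩; positivity)
  · obtain ⟨g, hg, hg0, hfg⟩ := hf.analyticOrderAt_ne_top.mp htop
    refine eventually_doubling_of_eq_pow_mul (G := fun x : ℝ ↦ ‖g x‖) ?_
      (hg.continuousAt.comp_of_eq Complex.continuous_ofReal.continuousAt
        Complex.ofReal_zero).norm.continuousWithinAt
      (norm_pos_iff.mpr (by simpa using hg0)) hε
    filter_upwards [eventually_nhdsGE_zero_ofReal hfg, self_mem_nhdsWithin] with x hx hx0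
    simp [hx, norm_smul, abs_of_nonneg hx0.out]

/-- (Proposition 2.7.) If `W` is a vector space of functions analytic
near `0` with finite maximal order of vanishing `m = maxord₀(W)`, then
`sup_{r>0} sup_{0≠f∈W} (max_{[0,2r]} |f| / max_{[0,r]} |f|) ≥ 2^m`: for every `ε > 0`
there are `r > 0` and a nonzero `f ∈ W`, analytic on a neighbourhood of `[0, 2r]`, with
`max_{0≤x≤2r} |f(x)| ≥ (2^m - ε) · max_{0≤x≤r} |f(x)|`. -/
theorem doubling_ratio_ge_maxord (W : Submodule ℂ (ℂ → ℂ))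
    (hW : ∀ f ∈ W, AnalyticAt ℂ f 0) (m : ℕ)
    (hm : IsGreatest {k : ℕ | ∃ f ∈ W, f ≠ (0 : ℂ → ℂ) ∧ ord0 f = k} m) :
    ∀ ε > (0 : ℝ), ∃ r > (0 : ℝ), ∃ f ∈ W, f ≠ (0 : ℂ → ℂ) ∧
      (∀ x ∈ Set.Icc (0 : ℝ) (2 * r), AnalyticAt ℂ f (x : ℂ)) ∧
      ((2 : ℝ) ^ m - ε) * sSup ((fun x : ℝ => ‖f (x : ℂ)‖) '' Set.Icc 0 r) ≤
        sSup ((fun x : ℝ => ‖f (x : ℂ)‖) '' Set.Icc 0 (2 * r)) := by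
  intro ε hε
  obtain ⟨f, hfW, hf_ne, rfl⟩ := hm.1
  have hf := hW f hfW
  have hanalytic : ∀ᶠ r in 𝓝[>] 0, ∀ x ∈ Icc (0 : ℝ) (2 * r), AnalyticAt ℂ f x :=
    eventually_forall_Icc_two_mul (eventually_nhdsGE_zero_ofReal hf.eventually_analyticAt)
  obtain ⟨r, ⟨hfr, hdoubling⟩, hr⟩ :=
    ((hanalytic.and (hf.eventually_doubling hε)).and self_mem_nhdsWithin).exists
  rw [ord0_eq_analyticOrderNatAt hf]
  exact ⟨r, hr, f, hfW, hf_ne, hfr, hdoubling⟩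
end

section
/- Fix an integer n ≥ 1 and set N = (n+2 choose 2). Then maxord₀(V_n) = N − 1 for V_n = {x ↦ P(x, e^x) : P ∈ ℂ[x,y], deg P ≤ n}. Explicitly: (i) there exists a nonzero bivariate polynomial P of total degree at most n such that f(x) = P(x, e^x) satisfies f(0) = f′(0) = ⋯ = f^{(N−2)}(0) = 0 and f^{(N−1)}(0) = 1; and (ii) no nonzero function of the form P(x, e^x) with deg P ≤ n vanishes at 0 to order N or higher. -/
/-!
The derivation `D = ∂ₓ + y ∂_y` of `ℂ[x, y]` satisfies `(P(x, eˣ))' = (D P)(x, eˣ)`, so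
`f⁽ˢ⁾(0) = φ (Dˢ P)` for the evaluation `φ` at `(0, 1)`. `D` preserves the space `W` of
polynomials of total degree `≤ n`, of dimension `N = (n+2 choose 2)` (stars and bars). By
Cayley–Hamilton the vanishing of `φ (Dˢ P)` for `s < N` forces it for all `s`, so `f ≡ 0` by
analyticity, and then `P = 0` because `x` and `eˣ` are algebraically independent. This is (ii),
and it makes `P ↦ (f⁽ˢ⁾(0))_{s<N}` an injective, hence bijective, linear map `W → ℂᴺ`; the
preimage of the last basis vector gives (i).
-/

open MvPolynomial Module

section Observability

variable {K V : Type*} [Field K] [AddCommGroup V] [Module K V] [FiniteDimensional K V]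
  (ψ : Module.End K V) (φ : V →ₗ[K] K)

theorem apply_pow_eq_zero_of_forall_lt_finrank {v : V}
    (h : ∀ s < finrank K V, φ ((ψ ^ s) v) = 0) (s : ℕ) : φ ((ψ ^ s) v) = 0 := by
  have hdeg : (Polynomial.X ^ s %ₘ ψ.charpoly).degree < finrank K V := by
    rw [← LinearMap.charpoly_natDegree ψ,
      ← Polynomial.degree_eq_natDegree (LinearMap.charpoly_monic ψ).ne_zero]
    exact Polynomial.degree_modByMonic_lt _ (LinearMap.charpoly_monic ψ)
  rw [LinearMap.pow_eq_aeval_mod_charpoly, Polynomial.aeval_eq_sum_range]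
  simp only [LinearMap.sum_apply, LinearMap.smul_apply, map_sum, map_smul]
  refine Finset.sum_eq_zero fun i _ => ?_
  by_cases hi : i < finrank K V
  · rw [h i hi, smul_zero]
  · rw [Polynomial.coeff_eq_zero_of_degree_lt (hdeg.trans_le (by exact_mod_cast not_lt.1 hi)),
      zero_smul]

theorem exists_apply_pow_eq_ite (hobs : ∀ v, (∀ s, φ ((ψ ^ s) v) = 0) → v = 0) {t : ℕ}
    (ht : t < finrank K V) :
    ∃ v, ∀ s < finrank K V, φ ((ψ ^ s) v) = if s = t then 1 else 0 := by
  let T : V →ₗ[K] Fin (finrank K V) → K := LinearMap.pi fun s => φ ∘ₗ ψ ^ (s : ℕ)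
  have hT : Function.Injective T := by
    rw [← LinearMap.ker_eq_bot, LinearMap.ker_eq_bot']
    exact fun v hv => hobs v <| apply_pow_eq_zero_of_forall_lt_finrank ψ φ fun s hs =>
      congrFun hv ⟨s, hs⟩
  obtain ⟨v, hv⟩ := (LinearMap.injective_iff_surjective_of_finrank_eq_finrank
    (by simp)).1 hT (Pi.single ⟨t, ht⟩ 1)
  refine ⟨v, fun s hs => ?_⟩
  simpa [T, Pi.single_apply, Fin.ext_iff] using congrFun hv ⟨s, hs⟩

end Observability

namespace MvPolynomial

theorem totalDegree_derivation_le {R σ : Type*} [CommRing R] [IsDomain R]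
    {D : Derivation R (MvPolynomial σ R) (MvPolynomial σ R)}
    (hD : ∀ i, (D (X i)).totalDegree ≤ 1) (p : MvPolynomial σ R) :
    (D p).totalDegree ≤ p.totalDegree := by
  have hmonomial : ∀ s a, (D (monomial s a)).totalDegree ≤ (monomial s a).totalDegree := by
    refine induction_on_monomial (fun a => by simp [derivation_C]) fun q i hq => ?_
    rcases eq_or_ne q 0 with rfl | hq0
    · simp
    rw [D.leibniz, smul_eq_mul, smul_eq_mul, totalDegree_mul_of_isDomain hq0 (X_ne_zero i),
      totalDegree_X]
    refine (totalDegree_add _ _).trans (max_le ?_ ?_)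
    · exact (totalDegree_mul _ _).trans (by grind)
    · exact (totalDegree_mul _ _).trans (by grind [totalDegree_X])
  conv_lhs => rw [p.as_sum, map_sum]
  exact (totalDegree_finsetSum _ _).trans <| Finset.sup_le fun d hd =>
    (hmonomial d _).trans <| (totalDegree_monomial_le _ _).trans (le_totalDegree hd)

theorem eval_comp_eq_zero_of_infinite {K σ : Type*} [Field K] (P : MvPolynomial σ K)
    (g : σ → Polynomial K) {S : Set K} (hS : S.Infinite)
    (h : ∀ x ∈ S, eval (fun i => (g i).eval x) P = 0) (x : K) :
    eval (fun i => (g i).eval x) P = 0 := by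
  have hcomp : ∀ x, eval (fun i => (g i).eval x) P = (aeval g P).eval x := fun x => by
    rw [← Polynomial.coe_aeval_eq_eval, ← AlgHom.comp_apply, comp_aeval]
    simp
  have hzero : aeval g P = 0 :=
    Polynomial.eq_zero_of_infinite_isRoot _ (hS.mono fun x hx => by simp [← hcomp, h x hx])
  rw [hcomp, hzero, Polynomial.eval_zero]

end MvPolynomial

lemma Finsupp.sum_id_fin_two (d : Fin 2 →₀ ℕ) : (d.sum fun _ e => e) = d 0 + d 1 := by
  rw [Finsupp.sum_fintype _ _ fun _ => rfl, Fin.sum_univ_two]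

noncomputable def degreeLeEquivLtPairs (n : ℕ) :
    {d : Fin 2 →₀ ℕ | (d.sum fun _ e => e) ≤ n} ≃
      {x : Fin (n + 2) × Fin (n + 2) // x.1 < x.2} where
  toFun d := ⟨(⟨d.1 0, by grind [Finsupp.sum_id_fin_two]⟩,
      ⟨d.1 0 + d.1 1 + 1, by grind [Finsupp.sum_id_fin_two]⟩), by simp [Fin.lt_def]⟩
  invFun x := ⟨Finsupp.equivFunOnFinite.symm ![x.1.1, x.1.2 - x.1.1 - 1], by
    simp [Finsupp.sum_id_fin_two]; omega⟩
  left_inv d := by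
    ext i; fin_cases i <;> simp; omega
  right_inv x := by
    have := Fin.lt_def.1 x.2; ext <;> simp; omega

theorem finrank_restrictTotalDegree_fin_two (K : Type*) [Field K] (n : ℕ) :
    finrank K (restrictTotalDegree (Fin 2) K n) = (n + 2).choose 2 := by
  rw [restrictTotalDegree, Module.finrank_eq_nat_card_basis (basisRestrictSupport K _),
    Nat.card_congr (degreeLeEquivLtPairs n), Nat.card_eq_fintype_card, Fintype.card_subtype,
    Fintype.card_product_filter_lt, Fintype.card_fin]

/-- `∂ₓ + y ∂_y`, which becomes `d/dx` under the substitution `y = eˣ`. -/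
noncomputable def expDerivation (R : Type*) [CommSemiring R] :
    Derivation R (MvPolynomial (Fin 2) R) (MvPolynomial (Fin 2) R) :=
  pderiv 0 + (X 1 : MvPolynomial (Fin 2) R) • pderiv 1

theorem hasDerivAt_eval_exp (P : MvPolynomial (Fin 2) ℂ) (x : ℂ) :
    HasDerivAt (fun x => eval ![x, Complex.exp x] P)
      (eval ![x, Complex.exp x] (expDerivation ℂ P)) x := by
  induction P using MvPolynomial.induction_on with
  | C a => simpa [derivation_C] using hasDerivAt_const x a
  | add p q hp hq => simpa using hp.fun_add hq
  | mul_X p i hp =>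
    have hX : HasDerivAt (fun x => eval ![x, Complex.exp x] (X i))
        (eval ![x, Complex.exp x] (expDerivation ℂ (X i))) x := by
      fin_cases i
      · simpa [expDerivation] using hasDerivAt_id' x
      · simpa [expDerivation] using Complex.hasDerivAt_exp x
    simpa [Derivation.leibniz, add_comm, mul_comm] using hp.fun_mul hX

theorem iteratedDeriv_eval_exp (P : MvPolynomial (Fin 2) ℂ) (s : ℕ) :
    iteratedDeriv s (fun x => eval ![x, Complex.exp x] P)
      = fun x => eval ![x, Complex.exp x] ((expDerivation ℂ)^[s] P) := by
  induction s generalizing P with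
  | zero => rfl
  | succ s ih =>
    rw [iteratedDeriv_succ', Function.iterate_succ_apply, ← ih]
    congr 1
    exact funext fun x => (hasDerivAt_eval_exp P x).deriv

theorem Differentiable.eq_zero_of_iteratedDeriv_eq_zero {f : ℂ → ℂ} (hf : Differentiable ℂ f)
    (c : ℂ) (h : ∀ s, iteratedDeriv s f c = 0) : f = 0 := by
  funext z
  simp [← Complex.taylorSeries_eq_of_entire hf c z, h]

theorem Complex.infinite_exp_preimage_singleton {y : ℂ} (hy : y ≠ 0) :
    (exp ⁻¹' {y}).Infinite := by
  have hinj : Function.Injective fun k : ℤ => log y + k * (2 * Real.pi * I) :=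
    fun k l hkl => by simpa using mul_right_cancel₀ two_pi_I_ne_zero (add_left_cancel hkl)
  refine (Set.infinite_range_of_injective hinj).mono ?_
  rintro _ ⟨k, rfl⟩
  rw [Set.mem_preimage, Set.mem_singleton_iff, exp_add, exp_log hy, exp_int_mul_two_pi_mul_I,
    mul_one]

theorem eq_zero_of_eval_exp_eq_zero {P : MvPolynomial (Fin 2) ℂ}
    (h : ∀ x, eval ![x, Complex.exp x] P = 0) : P = 0 := by
  have hvec (p q : Polynomial ℂ) (x : ℂ) :
      (fun i => (![p, q] i).eval x) = ![p.eval x, q.eval x] := by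
    funext i; fin_cases i <;> rfl
  have hline : ∀ y : ℂ, y ≠ 0 → ∀ x, eval ![x, y] P = 0 := by
    intro y hy x
    have hroots : ∀ x ∈ Complex.exp ⁻¹' {y}, eval ![x, y] P = 0 := fun x hx => hx ▸ h x
    simpa [hvec] using eval_comp_eq_zero_of_infinite P ![Polynomial.X, Polynomial.C y]
      (Complex.infinite_exp_preimage_singleton hy) (by simpa [hvec] using hroots) x
  refine MvPolynomial.funext fun v => ?_
  have hpunctured : ∀ y ∈ ({0}ᶜ : Set ℂ), eval ![v 0, y] P = 0 := fun y hy => hline y hy (v 0)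
  rw [show v = ![v 0, v 1] from List.ofFn_inj.mp rfl]
  simpa [hvec] using eval_comp_eq_zero_of_infinite P ![Polynomial.C (v 0), Polynomial.X]
    (Set.finite_singleton 0).infinite_compl (by simpa [hvec] using hpunctured) (v 1)

theorem expDerivation_mem_restrictTotalDegree {n : ℕ} {p : MvPolynomial (Fin 2) ℂ}
    (hp : p ∈ restrictTotalDegree (Fin 2) ℂ n) :
    expDerivation ℂ p ∈ restrictTotalDegree (Fin 2) ℂ n := by
  rw [mem_restrictTotalDegree] at hp ⊢
  refine (totalDegree_derivation_le (fun i => ?_) p).trans hp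
  fin_cases i <;> simp [expDerivation]

noncomputable def expDerivationOn (n : ℕ) : Module.End ℂ (restrictTotalDegree (Fin 2) ℂ n) :=
  (expDerivation ℂ).toLinearMap.restrict fun _ => expDerivation_mem_restrictTotalDegree

/-- Evaluation at `(0, e⁰)`. -/
noncomputable def evalZeroOne (n : ℕ) : restrictTotalDegree (Fin 2) ℂ n →ₗ[ℂ] ℂ :=
  (aeval ![0, 1]).toLinearMap ∘ₗ Submodule.subtype _

theorem iteratedDeriv_eval_exp_zero {n : ℕ} (P : restrictTotalDegree (Fin 2) ℂ n) (s : ℕ) :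
    iteratedDeriv s (fun x => eval ![x, Complex.exp x] (P : MvPolynomial (Fin 2) ℂ)) 0
      = evalZeroOne n ((expDerivationOn n ^ s) P) := by
  rw [iteratedDeriv_eval_exp, expDerivationOn, Module.End.pow_restrict]
  simp [evalZeroOne, Module.End.pow_apply]

theorem eval_exp_eq_zero_of_forall {n : ℕ} (P : restrictTotalDegree (Fin 2) ℂ n)
    (h : ∀ s, evalZeroOne n ((expDerivationOn n ^ s) P) = 0) :
    (fun x => eval ![x, Complex.exp x] (P : MvPolynomial (Fin 2) ℂ)) = 0 :=
  Differentiable.eq_zero_of_iteratedDeriv_eq_zero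
    (fun x => (hasDerivAt_eval_exp P x).differentiableAt) 0
    fun s => (iteratedDeriv_eval_exp_zero P s).trans (h s)

/-- (Lemma 2.8.) With `N = (n+2 choose 2)`, the maximal order of
vanishing at `0` among the functions `V_n = {x ↦ P(x, eˣ) : deg P ≤ n}` is exactly
`N - 1`: (i) there is a nonzero `P` of total degree at most `n` with
`f = P(·, e^·)` satisfying `f(0) = ⋯ = f^{(N-2)}(0) = 0` and `f^{(N-1)}(0) = 1`;
(ii) no nonzero function of this form vanishes at `0` to order `N` or higher. -/
theorem maxord_exponential_polynomials (n : ℕ) (hn : 1 ≤ n) :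
    (∃ P : MvPolynomial (Fin 2) ℂ, P ≠ 0 ∧ P.totalDegree ≤ n ∧
      (∀ s : ℕ, s ≤ (n + 2).choose 2 - 2 →
        iteratedDeriv s (fun x : ℂ => MvPolynomial.eval ![x, Complex.exp x] P) 0 = 0) ∧
      iteratedDeriv ((n + 2).choose 2 - 1)
        (fun x : ℂ => MvPolynomial.eval ![x, Complex.exp x] P) 0 = 1) ∧
    (∀ P : MvPolynomial (Fin 2) ℂ, P.totalDegree ≤ n →
      (fun x : ℂ => MvPolynomial.eval ![x, Complex.exp x] P) ≠ 0 →
      ∃ s : ℕ, s < (n + 2).choose 2 ∧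
        iteratedDeriv s (fun x : ℂ => MvPolynomial.eval ![x, Complex.exp x] P) 0 ≠ 0) := by
  set N := (n + 2).choose 2
  have hN : 3 ≤ N := by simpa using Nat.choose_le_choose 2 (by omega : 3 ≤ n + 2)
  have hdim : finrank ℂ (restrictTotalDegree (Fin 2) ℂ n) = N :=
    finrank_restrictTotalDegree_fin_two ℂ n
  have hobs : ∀ P, (∀ s, evalZeroOne n ((expDerivationOn n ^ s) P) = 0) → P = 0 := fun P h =>
    Subtype.ext <| eq_zero_of_eval_exp_eq_zero (congrFun (eval_exp_eq_zero_of_forall P h))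
  constructor
  · obtain ⟨Q, hQ⟩ := exists_apply_pow_eq_ite _ _ hobs (t := N - 1) (by omega)
    rw [hdim] at hQ
    refine ⟨Q, fun hQ0 => ?_, (mem_restrictTotalDegree _ _ _).1 Q.2, fun s hs => ?_, ?_⟩
    · have hQ0' : Q = 0 := Subtype.ext hQ0
      simpa [hQ0'] using hQ (N - 1) (by omega)
    · rw [iteratedDeriv_eval_exp_zero, hQ s (by omega), if_neg (by omega)]
    · rw [iteratedDeriv_eval_exp_zero, hQ _ (by omega), if_pos rfl]
  · intro P hP hf
    by_contra! hvanish
    let P' : restrictTotalDegree (Fin 2) ℂ n := ⟨P, (mem_restrictTotalDegree _ _ _).2 hP⟩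
    refine hf (eval_exp_eq_zero_of_forall P' (apply_pow_eq_zero_of_forall_lt_finrank _ _ ?_))
    intro s hs
    rw [← iteratedDeriv_eval_exp_zero]
    exact hvanish s (hdim ▸ hs)
end

section
/- Let φ : ℤ₊ → (0,∞) be nondecreasing, let [a,b] ⊂ ℝ, let c > 1/φ(1)², and let E = E_{a,b,c} ⊂ ℂ denote the open region bounded by the ellipse with foci a and b and major axis [a−c, b+c]. Let V = ⋃_{n≥1} V_n, with V_n ⊂ V_{n+1}, be a family of functions analytic on a neighbourhood of the closure of E, and suppose there is a constant K ≥ 1 such that sup_{z∈E} |f(z)| ≤ K^{φ(deg f)} · max_{x∈[a,b]} |f(x)| for all nonzero f ∈ V (i.e., the generalized Siciak extremal function Φ_{[a,b]}(·; V, φ) is bounded on E). Then there exists a constant C > 0 such that for all n ≥ 1 and all f ∈ V_n, max_{x∈[a,b]} |f′(x)| ≤ C · (φ(n))² · max_{x∈[a,b]} |f(x)|. -/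
/-!
The map `z ↦ (a + b)/2 + (b - a)/2 · cosh z` sends the line `re z = 0` onto `[a, b]` and the strip
`0 ≤ re z ≤ σ` onto the filled ellipse `E_σ` with foci `a`, `b` and major axis `(b - a) cosh σ`.
Pick `S > 0` with `E_S ⊆ E`. Hadamard's three lines theorem on the strip `0 ≤ re z ≤ S`, fed with
`‖f‖ ≤ M` on `[a, b]` and `‖f‖ ≤ K ^ φ(n) M` on `E_S`, gives `‖f‖ ≤ K ^ φ(1) M` on `E_σ` for
`σ = S φ(1)/φ(n)`. This ellipse contains a disc of radius `≍ (φ(1)/φ(n))²` around every point of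
`[a, b]`, and Cauchy's estimate on that disc yields the factor `φ(n)²`.
-/

open Complex Set Metric Topology

namespace Complex

theorem norm_sinh_sq_add_norm_cosh_sq (w : ℂ) :
    ‖sinh w‖ ^ 2 + ‖cosh w‖ ^ 2 = Real.cosh (2 * w.re) := by
  have hpar := parallelogram_law_with_norm ℝ (exp w) (exp (-w))
  rw [norm_exp, norm_exp, neg_re] at hpar
  have hexp : Real.exp w.re ^ 2 + Real.exp (-w.re) ^ 2 = 2 * Real.cosh (2 * w.re) := by
    rw [Real.cosh_eq, ← Real.exp_nat_mul, ← Real.exp_nat_mul]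
    push_cast
    ring_nf
  rw [sinh, cosh, norm_div, norm_div, RCLike.norm_ofNat]
  nlinarith [hpar, hexp]

theorem norm_cosh_sub_one_add_norm_cosh_add_one (z : ℂ) :
    ‖cosh z - 1‖ + ‖cosh z + 1‖ = 2 * Real.cosh z.re := by
  have hdouble : cosh z = cosh (z / 2) ^ 2 + sinh (z / 2) ^ 2 := by
    rw [← cosh_two_mul, mul_div_cancel₀ _ two_ne_zero]
  have hpyth := cosh_sq_sub_sinh_sq (z / 2)
  have hsub : cosh z - 1 = 2 * sinh (z / 2) ^ 2 := by linear_combination hdouble + hpyth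
  have hadd : cosh z + 1 = 2 * cosh (z / 2) ^ 2 := by linear_combination hdouble - hpyth
  have hre : 2 * (z / 2).re = z.re := by simp only [div_ofNat_re]; ring
  rw [hsub, hadd, norm_mul, norm_mul, norm_pow, norm_pow, RCLike.norm_ofNat, ← hre,
    ← norm_sinh_sq_add_norm_cosh_sq]
  ring

theorem exists_cosh_eq_of_re_nonneg (u : ℂ) : ∃ z : ℂ, cosh z = u ∧ 0 ≤ z.re := by
  obtain ⟨w, rfl⟩ := cos_surjective u
  rcases le_total 0 (w * I).re with h | h
  · exact ⟨w * I, cosh_mul_I w, h⟩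
  · exact ⟨-(w * I), by rw [cosh_neg, cosh_mul_I], by rw [neg_re]; linarith⟩

end Complex

theorem Real.one_add_sq_div_two_le_cosh (x : ℝ) : 1 + x ^ 2 / 2 ≤ Real.cosh x := by
  have hdouble : Real.cosh x = Real.cosh (x / 2) ^ 2 + Real.sinh (x / 2) ^ 2 := by
    rw [← Real.cosh_two_mul, mul_div_cancel₀ _ two_ne_zero]
  have hsinh : |x / 2| ≤ |Real.sinh (x / 2)| := by
    rw [Real.abs_sinh]; exact Real.self_le_sinh_iff.mpr (abs_nonneg _)
  nlinarith [Real.cosh_sq (x / 2), sq_le_sq.mpr hsinh, sq_abs (x / 2), sq_abs (Real.sinh (x / 2))]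

theorem Real.exists_pos_cosh_lt {y : ℝ} (hy : 1 < y) : ∃ x > 0, Real.cosh x < y := by
  have hev : ∀ᶠ x in 𝓝[>] 0, Real.cosh x < y :=
    Real.continuous_cosh.continuousWithinAt.eventually_lt continuousWithinAt_const
      (by rwa [Real.cosh_zero])
  exact (hev.and self_mem_nhdsWithin).exists.imp fun x hx => ⟨hx.2, hx.1⟩

theorem norm_le_sSup_norm_image_Icc {F : Type*} [NormedAddCommGroup F] {a b x : ℝ} {f : ℝ → F}
    (hf : ContinuousOn f (Icc a b)) (hx : x ∈ Icc a b) :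
    ‖f x‖ ≤ sSup ((fun y => ‖f y‖) '' Icc a b) :=
  le_csSup (isCompact_Icc.image_of_continuousOn hf.norm).bddAbove (mem_image_of_mem _ hx)

/-- The filled ellipse with foci `a`, `b` and major axis `(b - a) cosh σ`; it is the image of the
strip `|re z| ≤ σ` under `coshMap a b`. -/
def closedEllipse (a b σ : ℝ) : Set ℂ :=
  {w | ‖w - a‖ + ‖w - b‖ ≤ (b - a) * Real.cosh σ}

noncomputable def coshMap (a b : ℝ) (z : ℂ) : ℂ :=
  ((a + b) / 2 : ℝ) + ((b - a) / 2 : ℝ) * cosh z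

section coshMap

variable {a b : ℝ}

theorem mem_closedEllipse {σ : ℝ} {w : ℂ} :
    w ∈ closedEllipse a b σ ↔ ‖w - a‖ + ‖w - b‖ ≤ (b - a) * Real.cosh σ :=
  Iff.rfl

theorem differentiable_coshMap : Differentiable ℂ (coshMap a b) :=
  (differentiable_const _).add ((differentiable_const _).mul differentiable_cosh)

theorem norm_coshMap_sub_add_norm_coshMap_sub (hab : a ≤ b) (z : ℂ) :
    ‖coshMap a b z - a‖ + ‖coshMap a b z - b‖ = (b - a) * Real.cosh z.re := by
  have hsub_a : coshMap a b z - a = ((b - a) / 2 : ℝ) * (cosh z + 1) := by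
    simp only [coshMap]; push_cast; ring
  have hsub_b : coshMap a b z - b = ((b - a) / 2 : ℝ) * (cosh z - 1) := by
    simp only [coshMap]; push_cast; ring
  rw [hsub_a, hsub_b, norm_mul, norm_mul, norm_real, Real.norm_of_nonneg (by linarith),
    ← mul_add, add_comm, norm_cosh_sub_one_add_norm_cosh_add_one]
  ring

theorem closedEllipse_mono (hab : a ≤ b) {σ τ : ℝ} (h : |σ| ≤ |τ|) :
    closedEllipse a b σ ⊆ closedEllipse a b τ := fun _ hw =>
  hw.trans (mul_le_mul_of_nonneg_left (Real.cosh_le_cosh.mpr h) (by linarith))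

theorem coshMap_mem_closedEllipse (hab : a ≤ b) {σ : ℝ} {z : ℂ} (hz : |z.re| ≤ |σ|) :
    coshMap a b z ∈ closedEllipse a b σ :=
  closedEllipse_mono hab hz (norm_coshMap_sub_add_norm_coshMap_sub hab z).le

theorem exists_coshMap_eq_of_mem_closedEllipse (hab : a < b) {σ : ℝ} (hσ : 0 ≤ σ) {w : ℂ}
    (hw : w ∈ closedEllipse a b σ) : ∃ z, coshMap a b z = w ∧ z.re ∈ Icc 0 σ := by
  have hh : (((b - a) / 2 : ℝ) : ℂ) ≠ 0 := ofReal_ne_zero.mpr (by linarith)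
  obtain ⟨z, hz, hre⟩ := exists_cosh_eq_of_re_nonneg ((w - ((a + b) / 2 : ℝ)) / ((b - a) / 2 : ℝ))
  have hzw : coshMap a b z = w := by
    rw [coshMap, hz, mul_div_cancel₀ _ hh]; ring
  refine ⟨z, hzw, hre, ?_⟩
  have hcosh : Real.cosh z.re ≤ Real.cosh σ := by
    have := hw
    rw [mem_closedEllipse, ← hzw, norm_coshMap_sub_add_norm_coshMap_sub hab.le] at this
    exact le_of_mul_le_mul_left this (by linarith)
  rwa [Real.cosh_le_cosh, abs_of_nonneg hre, abs_of_nonneg hσ] at hcosh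

theorem exists_mem_Icc_coshMap_eq (hab : a ≤ b) {z : ℂ} (hz : z.re = 0) :
    ∃ x ∈ Icc a b, coshMap a b z = x := by
  obtain ⟨y, rfl⟩ : ∃ y : ℝ, z = y * I := ⟨z.im, Complex.ext (by simp [hz]) (by simp)⟩
  refine ⟨(a + b) / 2 + (b - a) / 2 * Real.cos y, ⟨?_, ?_⟩, ?_⟩
  · nlinarith [Real.neg_one_le_cos y]
  · nlinarith [Real.cos_le_one y]
  · rw [coshMap, cosh_mul_I, ← ofReal_cos]; push_cast; ring

theorem closedBall_subset_closedEllipse {x r σ : ℝ} (hx : x ∈ Icc a b)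
    (hr : r ≤ (b - a) / 2 * (Real.cosh σ - 1)) :
    closedBall (x : ℂ) r ⊆ closedEllipse a b σ := by
  intro w hw
  rw [mem_closedBall, dist_eq] at hw
  have hxa : ‖(x : ℂ) - a‖ = x - a := by
    rw [← ofReal_sub, norm_real, Real.norm_of_nonneg (by linarith [hx.1])]
  have hxb : ‖(x : ℂ) - b‖ = b - x := by
    rw [← ofReal_sub, norm_real, Real.norm_of_nonpos (by linarith [hx.2])]; ring
  have htri_a := norm_sub_le_norm_sub_add_norm_sub w x a
  have htri_b := norm_sub_le_norm_sub_add_norm_sub w x b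
  rw [mem_closedEllipse]
  linarith

theorem ofReal_mem_closedEllipse {x : ℝ} (hx : x ∈ Icc a b) (σ : ℝ) :
    (x : ℂ) ∈ closedEllipse a b σ :=
  closedBall_subset_closedEllipse hx (by nlinarith [Real.one_le_cosh σ, hx.1.trans hx.2])
    (mem_closedBall_self le_rfl)

theorem closedEllipse_mem_nhds (hab : a < b) {σ x : ℝ} (hσ : σ ≠ 0) (hx : x ∈ Icc a b) :
    closedEllipse a b σ ∈ 𝓝 (x : ℂ) := by
  have hr : 0 < (b - a) / 2 * (Real.cosh σ - 1) :=
    mul_pos (by linarith) (sub_pos.mpr (Real.one_lt_cosh.mpr hσ))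
  exact Filter.mem_of_superset (closedBall_mem_nhds _ hr)
    (closedBall_subset_closedEllipse hx le_rfl)

theorem exists_pos_closedEllipse_subset (hab : a < b) {c : ℝ} (hc : 0 < c) :
    ∃ S > 0, closedEllipse a b S ⊆ {w : ℂ | ‖w - a‖ + ‖w - b‖ < (b - a) + 2 * c} := by
  have hba : 0 < b - a := sub_pos.mpr hab
  obtain ⟨S, hS, hSc⟩ := Real.exists_pos_cosh_lt (y := 1 + 2 * c / (b - a))
    (lt_add_of_pos_right _ (by positivity))
  refine ⟨S, hS, fun w hw => show ‖w - a‖ + ‖w - b‖ < _ from hw.trans_lt ?_⟩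
  calc (b - a) * Real.cosh S < (b - a) * (1 + 2 * c / (b - a)) := mul_lt_mul_of_pos_left hSc hba
    _ = (b - a) + 2 * c := by field_simp

end coshMap

section Interpolation

variable {F : Type*} [NormedAddCommGroup F] [NormedSpace ℂ F] {a b S K p M : ℝ} {f : ℂ → F}

open HadamardThreeLines in
/-- Hadamard's three lines theorem on the strip `0 ≤ re z ≤ S`, transported by `coshMap a b`. -/
theorem norm_le_rpow_mul_of_mem_closedEllipse (hab : a < b) (hS : 0 < S) (hK : 1 ≤ K)
    (hp : 0 ≤ p) (hf : DifferentiableOn ℂ f (closedEllipse a b S))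
    (hreal : ∀ x ∈ Icc a b, ‖f x‖ ≤ M) (hbound : ∀ w ∈ closedEllipse a b S, ‖f w‖ ≤ K ^ p * M)
    {θ : ℝ} (hθ : θ ∈ Icc 0 1) {w : ℂ} (hw : w ∈ closedEllipse a b (θ * S)) :
    ‖f w‖ ≤ K ^ (p * θ) * M := by
  have hM : 0 ≤ M := (norm_nonneg _).trans (hreal a (left_mem_Icc.mpr hab.le))
  obtain ⟨z, rfl, hz0, hzθ⟩ :=
    exists_coshMap_eq_of_mem_closedEllipse hab (mul_nonneg hθ.1 hS.le) hw
  have hzS : z.re ≤ S := hzθ.trans (mul_le_of_le_one_left hS.le hθ.2)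
  have hstrip : MapsTo (coshMap a b) (verticalClosedStrip 0 S) (closedEllipse a b S) :=
    fun z hz => coshMap_mem_closedEllipse hab.le
      (by rw [abs_of_nonneg hz.1, abs_of_pos hS]; exact hz.2)
  have hdiff : DiffContOnCl ℂ (f ∘ coshMap a b) (verticalStrip 0 S) := by
    refine DifferentiableOn.diffContOnCl
      ((hf.comp differentiable_coshMap.differentiableOn hstrip).mono ?_)
    exact closure_minimal (preimage_mono Ioo_subset_Icc_self) (isClosed_Icc.preimage continuous_re)
  have hbdd : BddAbove ((norm ∘ (f ∘ coshMap a b)) '' verticalClosedStrip 0 S) :=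
    ⟨K ^ p * M, forall_mem_image.mpr fun z hz => hbound _ (hstrip hz)⟩
  have hedge₀ : ∀ z ∈ re ⁻¹' {0}, ‖(f ∘ coshMap a b) z‖ ≤ M := fun z hz => by
    obtain ⟨x, hx, hzx⟩ := exists_mem_Icc_coshMap_eq hab.le hz
    simpa only [Function.comp_apply, hzx] using hreal x hx
  have hedgeS : ∀ z ∈ re ⁻¹' {S}, ‖(f ∘ coshMap a b) z‖ ≤ K ^ p * M := fun z hz =>
    hbound _ (hstrip ⟨(mem_singleton_iff.mp hz).symm ▸ hS.le, (mem_singleton_iff.mp hz).le⟩)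
  have hthree := norm_le_interp_of_mem_verticalClosedStrip' hS ⟨hz0, hzS⟩ hdiff hbdd hedge₀ hedgeS
  rw [sub_zero, sub_zero] at hthree
  have hratio : z.re / S ≤ θ := (div_le_iff₀ hS).mpr hzθ
  calc ‖f (coshMap a b z)‖ ≤ M ^ (1 - z.re / S) * (K ^ p * M) ^ (z.re / S) := hthree
    _ = K ^ (p * (z.re / S)) * M := by
      rw [Real.mul_rpow (by positivity) hM, ← Real.rpow_mul (by linarith), mul_left_comm,
        ← Real.rpow_add' hM (by simp), sub_add_cancel, Real.rpow_one]
    _ ≤ K ^ (p * θ) * M := by gcongr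

theorem norm_deriv_le_of_closedEllipse (hab : a < b) (hS : 0 < S) (hK : 1 ≤ K)
    (hp : 0 ≤ p) (hf : DifferentiableOn ℂ f (closedEllipse a b S))
    (hreal : ∀ x ∈ Icc a b, ‖f x‖ ≤ M) (hbound : ∀ w ∈ closedEllipse a b S, ‖f w‖ ≤ K ^ p * M)
    {θ : ℝ} (hθ : θ ∈ Ioc 0 1) {x : ℝ} (hx : x ∈ Icc a b) :
    ‖deriv f x‖ ≤ K ^ (p * θ) * M / ((b - a) * (θ * S) ^ 2 / 4) := by
  have hr : 0 < (b - a) * (θ * S) ^ 2 / 4 := by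
    have := hθ.1; have := sub_pos.mpr hab; positivity
  have hball : closedBall (x : ℂ) ((b - a) * (θ * S) ^ 2 / 4) ⊆ closedEllipse a b (θ * S) :=
    closedBall_subset_closedEllipse hx (by
      nlinarith [Real.one_add_sq_div_two_le_cosh (θ * S), sub_pos.mpr hab])
  have hθS : closedEllipse a b (θ * S) ⊆ closedEllipse a b S := closedEllipse_mono hab.le (by
    rw [abs_of_pos (mul_pos hθ.1 hS), abs_of_pos hS]; exact mul_le_of_le_one_left hS.le hθ.2)
  refine norm_deriv_le_of_forall_mem_sphere_norm_le hr ?_ fun w hw =>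
    norm_le_rpow_mul_of_mem_closedEllipse hab hS hK hp hf hreal hbound (Ioc_subset_Icc_self hθ)
      (hball (sphere_subset_closedBall hw))
  refine DifferentiableOn.diffContOnCl ?_
  rw [closure_ball _ hr.ne']
  exact hf.mono (hball.trans hθS)

end Interpolation

theorem degV_le {V : ℕ → Set (ℂ → ℂ)} {f : ℂ → ℂ} {n : ℕ} (hn : 1 ≤ n) (hf : f ∈ V n) :
    degV V f ≤ n :=
  Nat.sInf_le ⟨hn, hf⟩

theorem markov_from_bounded_extremal_general (φ : ℕ → ℝ) (hφpos : ∀ n, 0 < φ n)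
    (hφmono : Monotone φ) (a b : ℝ) (hab : a < b) (c : ℝ) (hc : 1 / (φ 1) ^ 2 < c)
    (V : ℕ → Set (ℂ → ℂ))
    (hanal : ∀ n, ∀ f ∈ V n, ∃ U : Set ℂ, IsOpen U ∧
      closure {z : ℂ | ‖z - (a : ℂ)‖ + ‖z - (b : ℂ)‖ < (b - a) + 2 * c} ⊆ U ∧
      DifferentiableOn ℂ f U)
    (K : ℝ) (hK : 1 ≤ K)
    (hbound : ∀ f : ℂ → ℂ, (∃ n, 1 ≤ n ∧ f ∈ V n) → f ≠ 0 →
      ∀ z ∈ {z : ℂ | ‖z - (a : ℂ)‖ + ‖z - (b : ℂ)‖ < (b - a) + 2 * c},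
        ‖f z‖ ≤ K ^ φ (degV V f) *
          sSup ((fun x : ℝ => ‖f (x : ℂ)‖) '' Set.Icc a b)) :
    ∃ C > (0 : ℝ), ∀ n : ℕ, 1 ≤ n → ∀ f ∈ V n, ∀ x ∈ Set.Icc a b,
      ‖deriv (fun s : ℝ => f (s : ℂ)) x‖ ≤
        C * (φ n) ^ 2 * sSup ((fun y : ℝ => ‖f (y : ℂ)‖) '' Set.Icc a b) := by
  have hc0 : 0 < c := lt_trans (by have := hφpos 1; positivity) hc
  obtain ⟨S, hS, hSE⟩ := exists_pos_closedEllipse_subset hab hc0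
  refine ⟨4 * K ^ φ 1 / ((b - a) * S ^ 2 * φ 1 ^ 2),
    by have := hφpos 1; have := sub_pos.mpr hab; positivity, ?_⟩
  intro n hn f hf x hx
  obtain ⟨U, -, hEU, hfU⟩ := hanal n f hf
  have hfS : DifferentiableOn ℂ f (closedEllipse a b S) :=
    hfU.mono ((hSE.trans subset_closure).trans hEU)
  set M := sSup ((fun y : ℝ => ‖f (y : ℂ)‖) '' Icc a b)
  have hreal : ∀ y ∈ Icc a b, ‖f y‖ ≤ M := fun y =>
    norm_le_sSup_norm_image_Icc (hfS.continuousOn.comp continuous_ofReal.continuousOn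
      fun y hy => ofReal_mem_closedEllipse hy S)
  have hM : 0 ≤ M := (norm_nonneg _).trans (hreal a (left_mem_Icc.mpr hab.le))
  have hboundS : ∀ w ∈ closedEllipse a b S, ‖f w‖ ≤ K ^ φ n * M := fun w hw => by
    rcases eq_or_ne f 0 with rfl | hf0
    · simpa using mul_nonneg (Real.rpow_nonneg (by linarith) _) hM
    refine (hbound f ⟨n, hn, hf⟩ hf0 w (hSE hw)).trans (mul_le_mul_of_nonneg_right ?_ hM)
    exact Real.rpow_le_rpow_of_exponent_le hK (hφmono (degV_le hn hf))
  have hθ : φ 1 / φ n ∈ Ioc 0 1 :=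
    ⟨div_pos (hφpos 1) (hφpos n), (div_le_one (hφpos n)).mpr (hφmono hn)⟩
  have hderiv := norm_deriv_le_of_closedEllipse hab hS hK (hφpos n).le hfS hreal hboundS hθ hx
  rw [mul_div_cancel₀ _ (hφpos n).ne'] at hderiv
  rw [((hfS.differentiableAt (closedEllipse_mem_nhds hab hS.ne' hx)).hasDerivAt.comp_ofReal).deriv]
  refine hderiv.trans_eq ?_
  have := (hφpos n).ne'
  field_simp

/-- (Theorem 2.9.) Suppose `φ` is positive and nondecreasing,
`c > 1/φ(1)²`, and `E` is the open region bounded by the ellipse with foci `a, b` and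
major axis `[a-c, b+c]`, i.e. `E = {z : |z-a| + |z-b| < (b-a) + 2c}`. If the functions
of the family `V` are analytic on a neighbourhood of the closure of `E` and the
generalized Siciak extremal function of `[a,b]` is bounded on `E`, i.e.
`sup_E |f| ≤ K^{φ(deg f)} max_{[a,b]} |f|` for all nonzero `f ∈ V`, then a Markov
inequality holds: `max_{[a,b]} |f'| ≤ C φ(n)² max_{[a,b]} |f|` for all `f ∈ V_n`. -/
theorem markov_from_bounded_extremal (φ : ℕ → ℝ) (hφpos : ∀ n, 0 < φ n)
    (hφmono : Monotone φ) (a b : ℝ) (hab : a < b) (c : ℝ) (hc : 1 / (φ 1) ^ 2 < c)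
    (V : ℕ → Set (ℂ → ℂ)) (hmono : ∀ n, V n ⊆ V (n + 1))
    (hanal : ∀ n, ∀ f ∈ V n, ∃ U : Set ℂ, IsOpen U ∧
      closure {z : ℂ | ‖z - (a : ℂ)‖ + ‖z - (b : ℂ)‖ < (b - a) + 2 * c} ⊆ U ∧
      DifferentiableOn ℂ f U)
    (K : ℝ) (hK : 1 ≤ K)
    (hbound : ∀ f : ℂ → ℂ, (∃ n, 1 ≤ n ∧ f ∈ V n) → f ≠ 0 →
      ∀ z ∈ {z : ℂ | ‖z - (a : ℂ)‖ + ‖z - (b : ℂ)‖ < (b - a) + 2 * c},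
        ‖f z‖ ≤ K ^ φ (degV V f) *
          sSup ((fun x : ℝ => ‖f (x : ℂ)‖) '' Set.Icc a b)) :
    ∃ C > (0 : ℝ), ∀ n : ℕ, 1 ≤ n → ∀ f ∈ V n, ∀ x ∈ Set.Icc a b,
      ‖deriv (fun s : ℝ => f (s : ℂ)) x‖ ≤
        C * (φ n) ^ 2 * sSup ((fun y : ℝ => ‖f (y : ℂ)‖) '' Set.Icc a b) :=
  markov_from_bounded_extremal_general φ hφpos hφmono a b hab c hc V hanal K hK hbound
end

section
/- Let t ∈ ℂ[z] be a polynomial of degree d ≥ 1, let P ∈ ℂ[z,w] be a bivariate polynomial of total degree at most n, and let c ∈ ℂ. For each w ∈ ℂ let z₁(w),…,z_d(w) denote the d roots of the polynomial t(z) − w, repeated according to multiplicity, and define P̃_c(w) = Π_{j=1}^d ( P(z_j(w), e^w) − c ). Then there exist polynomials b₀, b₁, …, b_{nd} ∈ ℂ[w], each of degree at most n, such that P̃_c(w) = Σ_{k=0}^{nd} b_k(w) e^{kw} for all w ∈ ℂ. -/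
open MvPolynomial AddMonoidAlgebra Finset Fin

lemma my_totalDegree_esymm_le (d k : ℕ) : (esymm (Fin d) ℂ k).totalDegree ≤ k := by
  rw [MvPolynomial.esymm]
  refine (totalDegree_finset_sum _ _).trans (Finset.sup_le fun s hs => ?_)
  refine (totalDegree_finset_prod _ _).trans ?_
  simp only [totalDegree_X]
  simp [Finset.mem_powersetCard] at hs
  simp [hs]

lemma my_totalDegree_esymmAlgHomMonomial_le (d : ℕ) (t : Fin d →₀ ℕ) (r : ℂ) :
    (esymmAlgHomMonomial (Fin d) t r).totalDegree ≤ ∑ i, (i + 1) * t i := by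
  rw [esymmAlgHomMonomial, esymmAlgHom_apply, aeval_monomial]
  refine (totalDegree_mul _ _).trans ?_
  have h1 : (algebraMap ℂ (MvPolynomial (Fin d) ℂ) r).totalDegree = 0 := totalDegree_C r
  rw [h1, zero_add]
  rw [Finsupp.prod]
  refine (totalDegree_finset_prod _ _).trans ?_
  have : ∀ i ∈ t.support, ((esymm (Fin d) ℂ (i + 1)) ^ t i).totalDegree ≤ (i + 1) * t i := by
    intro i _
    refine (totalDegree_pow _ _).trans ?_
    rw [mul_comm]
    exact Nat.mul_le_mul_right _ (my_totalDegree_esymm_le d (i + 1))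
  refine (Finset.sum_le_sum this).trans ?_
  exact Finset.sum_le_sum_of_subset (t.support.subset_univ)

lemma my_card_le_fin (d : ℕ) (i : Fin d) :
    (Finset.filter (fun j : Fin d => (j : ℕ) ≤ (i : ℕ)) Finset.univ).card = (i : ℕ) + 1 := by
  have h : (Finset.filter (fun j : Fin d => (j : ℕ) ≤ (i : ℕ)) Finset.univ) = Finset.Iic i := by
    ext j
    rw [Finset.mem_filter, Finset.mem_Iic, Fin.le_def]
    simp
  rw [h, Fin.card_Iic]

lemma my_sum_accumulate (d : ℕ) (t : Fin d → ℕ) :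
    ∑ j : Fin d, accumulate d d t j = ∑ i : Fin d, ((i : ℕ) + 1) * t i := by
  simp only [accumulate_apply]
  have h1 : ∀ j : Fin d, ∑ i ∈ Finset.filter (fun i : Fin d => (j:ℕ) ≤ (i:ℕ)) Finset.univ, t i
      = ∑ i : Fin d, if (j:ℕ) ≤ (i:ℕ) then t i else 0 := fun j => Finset.sum_filter _ _
  rw [Finset.sum_congr rfl fun j _ => h1 j, Finset.sum_comm]
  refine Finset.sum_congr rfl fun i _ => ?_
  rw [← Finset.sum_filter, Finset.sum_const, smul_eq_mul, my_card_le_fin]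

lemma exists_esymm_rep {d : ℕ} [NeZero d] (D : ℕ) (p : MvPolynomial (Fin d) ℂ)
    (hp : p.IsSymmetric) (hpd : p.totalDegree ≤ D) :
    ∃ q : MvPolynomial (Fin d) ℂ,
      aeval (fun i : Fin d => esymm (Fin d) ℂ ((i : ℕ) + 1)) q = p ∧
      ∀ α ∈ q.support, (∑ i : Fin d, ((i : ℕ) + 1) * α i) ≤ D := by
  induction' he : p.supDegree toLex using WellFoundedLT.induction with s ih generalizing p
  subst he
  obtain rfl | h0 := eq_or_ne p 0
  · exact ⟨0, by simp, by intro α hα; simp at hα⟩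
  set t : Fin d →₀ ℕ :=
    Finsupp.equivFunOnFinite.symm (invAccumulate d d <| ↑(ofLex <| p.supDegree toLex)) with hts
  have hacc : accumulate d d ↑t = ↑(ofLex (p.supDegree toLex)) := by
    rw [hts]; exact accumulate_invAccumulate le_rfl hp.antitone_supDegree
  obtain ⟨α₀, hα₀, hα₀e⟩ := exists_supDegree_mem_support toLex h0
  have hsumle : ∑ j : Fin d, (ofLex (p.supDegree toLex)) j ≤ D := by
    rw [hα₀e]
    calc ∑ j, (ofLex (toLex α₀)) j = ∑ j, α₀ j := by rw [ofLex_toLex]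
      _ = α₀.sum fun _ e => e := (Finsupp.sum_fintype α₀ (fun _ e => e) (fun _ => rfl)).symm
      _ ≤ p.totalDegree := le_totalDegree hα₀
      _ ≤ D := hpd
  have hwt : ∑ i : Fin d, ((i : ℕ) + 1) * t i ≤ D := by
    rw [← my_sum_accumulate d ↑t]
    calc ∑ j : Fin d, accumulate d d (↑t) j
        = ∑ j : Fin d, (ofLex (p.supDegree toLex)) j := by rw [hacc]
      _ ≤ D := hsumle
  have hlc0 : p.leadingCoeff toLex ≠ 0 := by
    rwa [Ne, leadingCoeff_eq_zero toLex.injective]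
  set m := esymmAlgHomMonomial (Fin d) t (p.leadingCoeff toLex) with hm
  have hd2 : m.supDegree toLex = p.supDegree toLex := by
    rw [← ofLex_inj, DFunLike.ext'_iff, hm, supDegree_esymmAlgHomMonomial hlc0 t le_rfl]
    exact hacc
  have hlcm : m.leadingCoeff toLex = p.leadingCoeff toLex :=
    leadingCoeff_esymmAlgHomMonomial t le_rfl
  have hmtd : m.totalDegree ≤ D := (my_totalDegree_esymmAlgHomMonomial_le d t _).trans hwt
  have haevalm : aeval (fun i : Fin d => esymm (Fin d) ℂ ((i : ℕ) + 1))
      (monomial t (p.leadingCoeff toLex)) = m := by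
    rw [hm, esymmAlgHomMonomial, esymmAlgHom_apply]
  obtain hpm | hne := eq_or_ne p m
  · refine ⟨monomial t (p.leadingCoeff toLex), by rw [haevalm, ← hpm], ?_⟩
    intro α hαs
    have := Finset.mem_singleton.1 (MvPolynomial.support_monomial_subset hαs)
    subst this; exact hwt
  have hlt := (supDegree_sub_lt_of_leadingCoeff_eq toLex.injective hd2.symm
    hlcm.symm).resolve_right hne
  have hsym' : (p - m).IsSymmetric := hp.sub (isSymmetric_esymmAlgHomMonomial _ _)
  have htd' : (p - m).totalDegree ≤ D := by
    rw [sub_eq_add_neg]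
    exact (totalDegree_add _ _).trans (max_le hpd (by rw [totalDegree_neg]; exact hmtd))
  obtain ⟨q', hq'1, hq'2⟩ := ih _ hlt (p - m) hsym' htd' rfl
  refine ⟨q' + monomial t (p.leadingCoeff toLex), ?_, ?_⟩
  · rw [map_add, hq'1, haevalm, sub_add_cancel]
  · intro α hαs
    rcases Finset.mem_union.1 (Finsupp.support_add hαs) with h | h
    · exact hq'2 α h
    · have := Finset.mem_singleton.1 (MvPolynomial.support_monomial_subset h)
      subst this; exact hwt

noncomputable def acoef (P : MvPolynomial (Fin 2) ℂ) (k : ℕ) : Polynomial ℂ :=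
  ∑ m ∈ P.support.filter (fun m => m 1 = k),
    Polynomial.C (MvPolynomial.coeff m P) * Polynomial.X ^ (m 0)

lemma acoef_natDegree_le {n : ℕ} {P : MvPolynomial (Fin 2) ℂ} (hP : P.totalDegree ≤ n) (k : ℕ) :
    (acoef P k).natDegree ≤ n - k := by
  refine (Polynomial.natDegree_sum_le _ _).trans ?_
  rw [Finset.fold_max_le]
  refine ⟨Nat.zero_le _, fun m hm => ?_⟩
  rw [Finset.mem_filter] at hm
  have h1 : m 0 + m 1 ≤ n := by
    refine le_trans ?_ (le_trans (MvPolynomial.le_totalDegree hm.1) hP)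
    rw [Finsupp.sum_fintype m (fun _ e => e) (fun _ => rfl), Fin.sum_univ_two]
  have h2 : m 0 ≤ n - k := by omega
  calc (Polynomial.C (MvPolynomial.coeff m P) * Polynomial.X ^ (m 0)).natDegree
      ≤ (Polynomial.X ^ (m 0) : Polynomial ℂ).natDegree := Polynomial.natDegree_C_mul_le _ _
    _ ≤ n - k := by rw [Polynomial.natDegree_X_pow]; exact h2

lemma eval_acoef {n : ℕ} {P : MvPolynomial (Fin 2) ℂ} (hP : P.totalDegree ≤ n) (z y : ℂ) :
    MvPolynomial.eval ![z, y] P = ∑ k ∈ Finset.range (n + 1), (acoef P k).eval z * y ^ k := by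
  have hmap : ∀ m ∈ P.support, m 1 ∈ Finset.range (n + 1) := by
    intro m hm
    rw [Finset.mem_range, Nat.lt_succ_iff]
    refine le_trans ?_ (le_trans (MvPolynomial.le_totalDegree hm) hP)
    rw [Finsupp.sum_fintype m (fun _ e => e) (fun _ => rfl), Fin.sum_univ_two]
    omega
  rw [MvPolynomial.eval_eq', ← Finset.sum_fiberwise_of_maps_to hmap
    (fun m => MvPolynomial.coeff m P * ∏ i, (![z, y]) i ^ m i)]
  refine Finset.sum_congr rfl fun k _ => ?_
  rw [acoef, Polynomial.eval_finset_sum, Finset.sum_mul]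
  refine Finset.sum_congr rfl fun m hm => ?_
  rw [Finset.mem_filter] at hm
  rw [Fin.prod_univ_two, Polynomial.eval_mul, Polynomial.eval_C, Polynomial.eval_pow,
    Polynomial.eval_X, hm.2]
  simp [mul_assoc]

lemma multiset_exists_fin_map {α : Type*} {d : ℕ} (s : Multiset α) (h : Multiset.card s = d) :
    ∃ r : Fin d → α, Multiset.map r Finset.univ.val = s := by
  revert h
  induction s using Quot.inductionOn with
  | h l =>
    intro h
    have h' : l.length = d := by simpa using h
    subst h'
    refine ⟨l.get, ?_⟩
    have huniv : (Finset.univ.val : Multiset (Fin l.length)) = ↑(List.finRange l.length) := rfl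
    rw [huniv, Multiset.map_coe, ← List.ofFn_eq_map, List.ofFn_get]
    rfl

noncomputable def Ffact (d n : ℕ) (g : ℕ → Polynomial ℂ) (j : Fin d) :
    Polynomial (MvPolynomial (Fin d) ℂ) :=
  ∑ k ∈ Finset.range (n + 1),
    Polynomial.C (Polynomial.aeval (MvPolynomial.X j) (g k)) * Polynomial.X ^ k

noncomputable def Fprod (d n : ℕ) (g : ℕ → Polynomial ℂ) : Polynomial (MvPolynomial (Fin d) ℂ) :=
  ∏ j : Fin d, Ffact d n g j

lemma coeff_Ffact (d n : ℕ) (g : ℕ → Polynomial ℂ) (j : Fin d) (K : ℕ) :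
    (Ffact d n g j).coeff K =
      if K ∈ Finset.range (n + 1) then Polynomial.aeval (MvPolynomial.X j) (g K) else 0 := by
  rw [Ffact, Polynomial.finset_sum_coeff]
  have hterm : ∀ k ∈ Finset.range (n + 1),
      (Polynomial.C (Polynomial.aeval (MvPolynomial.X j : MvPolynomial (Fin d) ℂ) (g k))
        * Polynomial.X ^ k).coeff K
      = if k = K then Polynomial.aeval (MvPolynomial.X j : MvPolynomial (Fin d) ℂ) (g k)
        else 0 := by
    intro k _
    rw [Polynomial.coeff_C_mul, Polynomial.coeff_X_pow]
    by_cases h : k = K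
    · subst h; simp
    · rw [if_neg (fun hh => h hh.symm), if_neg h, mul_zero]
  rw [Finset.sum_congr rfl hterm, Finset.sum_ite_eq' (Finset.range (n + 1)) K
    (fun k => Polynomial.aeval (MvPolynomial.X j : MvPolynomial (Fin d) ℂ) (g k))]

lemma totalDegree_aeval_X_le {d : ℕ} (j : Fin d) (q : Polynomial ℂ) :
    (Polynomial.aeval (MvPolynomial.X j : MvPolynomial (Fin d) ℂ) q).totalDegree ≤ q.natDegree := by
  rw [Polynomial.aeval_eq_sum_range]
  refine (MvPolynomial.totalDegree_finset_sum _ _).trans (Finset.sup_le fun i hi => ?_)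
  refine (MvPolynomial.totalDegree_smul_le _ _).trans ?_
  refine (MvPolynomial.totalDegree_pow _ _).trans ?_
  rw [MvPolynomial.totalDegree_X, mul_one]
  rw [Finset.mem_range] at hi; omega

lemma coeff_prod_totalDegree_le {d : ℕ} {ι : Type*} (s : Finset ι)
    (G : ι → Polynomial (MvPolynomial (Fin d) ℂ)) (A : ℕ)
    (h : ∀ j ∈ s, ∀ K, ((G j).coeff K).totalDegree ≤ A) :
    ∀ K, ((∏ j ∈ s, G j).coeff K).totalDegree ≤ A * s.card := by
  classical
  induction s using Finset.induction_on with
  | empty =>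
    intro K
    rw [Finset.prod_empty]
    rcases eq_or_ne K 0 with rfl | hK
    · simp
    · rw [Polynomial.coeff_one, if_neg (by omega)]
      simp
  | @insert a s' ha ih =>
    intro K
    rw [Finset.prod_insert ha, Polynomial.coeff_mul]
    refine (MvPolynomial.totalDegree_finset_sum _ _).trans (Finset.sup_le fun x _ => ?_)
    refine (MvPolynomial.totalDegree_mul _ _).trans ?_
    have h1 := h a (Finset.mem_insert_self a s') x.1
    have h2 := ih (fun j hj K => h j (Finset.mem_insert_of_mem hj) K) x.2
    rw [Finset.card_insert_of_notMem ha]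
    calc ((G a).coeff x.1).totalDegree + ((∏ j ∈ s', G j).coeff x.2).totalDegree
        ≤ A + A * s'.card := Nat.add_le_add h1 h2
      _ = A * (s'.card + 1) := by ring

lemma Fprod_coeff_symmetric (d n : ℕ) (g : ℕ → Polynomial ℂ) (K : ℕ) :
    ((Fprod d n g).coeff K).IsSymmetric := by
  intro e
  have hmap : ∀ j : Fin d, (Ffact d n g j).map
      (MvPolynomial.rename e : MvPolynomial (Fin d) ℂ →ₐ[ℂ] MvPolynomial (Fin d) ℂ).toRingHom
      = Ffact d n g (e j) := by
    intro j
    rw [Ffact, Polynomial.map_sum]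
    refine Finset.sum_congr rfl fun k _ => ?_
    rw [Polynomial.map_mul, Polynomial.map_pow, Polynomial.map_C, Polynomial.map_X]
    congr 2
    show MvPolynomial.rename e (Polynomial.aeval (MvPolynomial.X j) (g k)) = _
    rw [← Polynomial.aeval_algHom_apply, MvPolynomial.rename_X]
  have : (Fprod d n g).map
      (MvPolynomial.rename e : MvPolynomial (Fin d) ℂ →ₐ[ℂ] MvPolynomial (Fin d) ℂ).toRingHom
      = Fprod d n g := by
    rw [Fprod, Polynomial.map_prod]
    rw [Finset.prod_congr rfl fun j _ => hmap j]
    exact Equiv.prod_comp e _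
  calc MvPolynomial.rename e ((Fprod d n g).coeff K)
      = ((Fprod d n g).map
        (MvPolynomial.rename e : MvPolynomial (Fin d) ℂ →ₐ[ℂ] MvPolynomial (Fin d) ℂ).toRingHom).coeff K := by
        rw [Polynomial.coeff_map]; rfl
    _ = (Fprod d n g).coeff K := by rw [this]

lemma Fprod_natDegree_le (d n : ℕ) (g : ℕ → Polynomial ℂ) :
    (Fprod d n g).natDegree ≤ n * d := by
  refine (Polynomial.natDegree_prod_le _ _).trans ?_
  have : ∀ j : Fin d, (Ffact d n g j).natDegree ≤ n := by
    intro j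
    refine (Polynomial.natDegree_sum_le _ _).trans ?_
    rw [Finset.fold_max_le]
    refine ⟨Nat.zero_le _, fun k hk => ?_⟩
    rw [Finset.mem_range] at hk
    calc (Polynomial.C (Polynomial.aeval (MvPolynomial.X j) (g k)) * Polynomial.X ^ k).natDegree
        ≤ (Polynomial.X ^ k : Polynomial (MvPolynomial (Fin d) ℂ)).natDegree :=
          Polynomial.natDegree_C_mul_le _ _
      _ ≤ n := by rw [Polynomial.natDegree_X_pow]; omega
  calc ∑ j : Fin d, (Ffact d n g j).natDegree ≤ ∑ _j : Fin d, n := Finset.sum_le_sum fun j _ => this j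
    _ = n * d := by rw [Finset.sum_const, Finset.card_univ, Fintype.card_fin, smul_eq_mul, mul_comm]

/-- Let `t` have degree `d ≥ 1`, `P` total degree at most `n`, `c ∈ ℂ`.
For `w ∈ ℂ` let `z₁(w), …, z_d(w)` be the roots of `t(z) - w` with multiplicity, and set
`P̃_c(w) = ∏_j (P(z_j(w), e^w) - c)`. Then `P̃_c(w) = Σ_{k=0}^{nd} b_k(w) e^{kw}` for
polynomials `b_k` of degree at most `n`. -/
theorem symmetrized_exponential_polynomial (t : Polynomial ℂ) (hd : 1 ≤ t.natDegree)
    (n : ℕ) (P : MvPolynomial (Fin 2) ℂ) (hP : P.totalDegree ≤ n) (c : ℂ) :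
    ∃ b : ℕ → Polynomial ℂ, (∀ k, (b k).natDegree ≤ n) ∧
      ∀ w : ℂ,
        (((t - Polynomial.C w).roots).map
            (fun z => MvPolynomial.eval ![z, Complex.exp w] P - c)).prod =
          ∑ k ∈ Finset.range (n * t.natDegree + 1),
            (b k).eval w * Complex.exp (k * w) := by
  classical
  set d := t.natDegree with hdd
  haveI : NeZero d := ⟨by omega⟩
  set g : ℕ → Polynomial ℂ := fun k => if k = 0 then acoef P 0 - Polynomial.C c else acoef P k
    with hg
  have hgdeg : ∀ k, (g k).natDegree ≤ n := by
    intro k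
    rcases eq_or_ne k 0 with rfl | hk
    · simp only [hg, if_pos rfl]
      rw [Polynomial.natDegree_sub_C]
      exact (acoef_natDegree_le hP 0).trans (by omega)
    · simp only [hg, if_neg hk]
      exact (acoef_natDegree_le hP k).trans (by omega)
  have hfact : ∀ z y : ℂ, MvPolynomial.eval ![z, y] P - c
      = ∑ k ∈ Finset.range (n + 1), (g k).eval z * y ^ k := by
    intro z y
    have h1 : ∀ k ∈ Finset.range (n + 1), (g k).eval z * y ^ k
        = (acoef P k).eval z * y ^ k + (if k = 0 then -c * y ^ k else 0) := by
      intro k _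
      rcases eq_or_ne k 0 with rfl | hk
      · rw [if_pos rfl]
        simp only [hg, if_pos rfl, Polynomial.eval_sub, Polynomial.eval_C]
        ring
      · simp only [hg, if_neg hk]; ring
    rw [Finset.sum_congr rfl h1, Finset.sum_add_distrib,
      Finset.sum_ite_eq' (Finset.range (n + 1)) 0 (fun k => -c * y ^ k),
      if_pos (Finset.mem_range.2 (by omega)), ← eval_acoef hP z y]
    ring
  have hsym := Fprod_coeff_symmetric d n g
  have htdS : ∀ K, ((Fprod d n g).coeff K).totalDegree ≤ n * d := by
    intro K
    have hfac : ∀ j ∈ (Finset.univ : Finset (Fin d)), ∀ K',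
        ((Ffact d n g j).coeff K').totalDegree ≤ n := by
      intro j _ K'
      rw [coeff_Ffact]
      split_ifs with h
      · exact (totalDegree_aeval_X_le j (g K')).trans (hgdeg K')
      · simp
    have := coeff_prod_totalDegree_le Finset.univ (Ffact d n g) n hfac K
    rwa [Finset.card_univ, Fintype.card_fin] at this
  choose q hq1 hq2 using fun K =>
    exists_esymm_rep (n * d) ((Fprod d n g).coeff K) (hsym K) (htdS K)
  set L := t.leadingCoeff with hL
  have ht0 : t ≠ 0 := fun h => by rw [h] at hdd; simp at hdd; omega
  have hL0 : L ≠ 0 := Polynomial.leadingCoeff_ne_zero.2 ht0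
  set v : Fin d → Polynomial ℂ := fun i =>
    Polynomial.C ((-1 : ℂ) ^ ((i : ℕ) + 1) * L⁻¹) *
      (Polynomial.C (t.coeff (d - ((i : ℕ) + 1))) -
        if (i : ℕ) + 1 = d then Polynomial.X else 0) with hv
  have hvdeg : ∀ i : Fin d, (v i).natDegree ≤ if (i : ℕ) + 1 = d then 1 else 0 := by
    intro i
    refine (Polynomial.natDegree_C_mul_le _ _).trans ?_
    split_ifs with h
    · refine (Polynomial.natDegree_sub_le _ _).trans ?_
      simp [Polynomial.natDegree_X]
    · simp
  refine ⟨fun K => MvPolynomial.aeval v (q K), ?_, ?_⟩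
  · -- degree bound
    intro K
    show (MvPolynomial.aeval v (q K)).natDegree ≤ n
    have hrep : MvPolynomial.aeval v (q K)
        = ∑ α ∈ (q K).support,
            Polynomial.C (MvPolynomial.coeff α (q K)) * ∏ i, (v i) ^ (α i) := by
      conv_lhs => rw [(q K).as_sum]
      rw [map_sum]
      refine Finset.sum_congr rfl fun α hα => ?_
      rw [MvPolynomial.aeval_monomial, Polynomial.algebraMap_eq]
      congr 1
      exact Finsupp.prod_fintype _ _ (fun i => pow_zero _)
    rw [hrep]
    refine (Polynomial.natDegree_sum_le _ _).trans ?_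
    rw [Finset.fold_max_le]
    refine ⟨Nat.zero_le _, fun α hα => ?_⟩
    have hw := hq2 K α hα
    have hstep : (Polynomial.C (MvPolynomial.coeff α (q K)) * ∏ i, (v i) ^ (α i)).natDegree
        ≤ ∑ i, α i * (if (i : ℕ) + 1 = d then 1 else 0) := by
      refine (Polynomial.natDegree_C_mul_le _ _).trans ?_
      refine (Polynomial.natDegree_prod_le _ _).trans ?_
      refine Finset.sum_le_sum fun i _ => ?_
      refine (Polynomial.natDegree_pow_le).trans ?_
      exact Nat.mul_le_mul_left _ (hvdeg i)
    refine hstep.trans ?_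
    have hkey : d * (∑ i, α i * (if (i : ℕ) + 1 = d then 1 else 0)) ≤ d * n := by
      rw [Finset.mul_sum]
      calc ∑ i, d * (α i * (if (i : ℕ) + 1 = d then 1 else 0))
          ≤ ∑ i : Fin d, ((i : ℕ) + 1) * α i := by
            refine Finset.sum_le_sum fun i _ => ?_
            split_ifs with h
            · rw [mul_one, h]
            · simp
        _ ≤ n * d := hw
        _ = d * n := by ring
    exact Nat.le_of_mul_le_mul_left hkey (by omega)
  · -- evaluation identity
    intro w
    set p := t - Polynomial.C w with hp
    have hpd : p.natDegree = d := by rw [hp, Polynomial.natDegree_sub_C]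
    have hp0 : p ≠ 0 := fun h => by rw [h] at hpd; simp at hpd; omega
    have hcard : Multiset.card p.roots = d := by
      rw [← hpd]
      exact (Polynomial.splits_iff_card_roots).1 (IsAlgClosed.splits p)
    obtain ⟨r, hr⟩ := multiset_exists_fin_map p.roots hcard
    have hlcp : p.leadingCoeff = L := by
      rw [Polynomial.leadingCoeff, hpd, hp, Polynomial.coeff_sub, Polynomial.coeff_C,
        if_neg (by omega), sub_zero]
      rfl
    have hesymm : ∀ i : Fin d, p.roots.esymm ((i : ℕ) + 1) = (v i).eval w := by
      intro i
      set m := (i : ℕ) + 1 with hm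
      have hmd : m ≤ d := i.isLt
      have hco := Polynomial.coeff_eq_esymm_roots_of_card (hcard.trans hpd.symm)
        (k := d - m) (by rw [hpd]; omega)
      rw [hpd, hlcp, show d - (d - m) = m from by omega] at hco
      have hsq : ((-1 : ℂ) ^ m) * ((-1 : ℂ) ^ m) = 1 := by
        rw [← pow_add]
        exact Even.neg_one_pow ⟨m, by ring⟩
      have he : p.roots.esymm m = ((-1 : ℂ) ^ m * L⁻¹) * p.coeff (d - m) := by
        calc p.roots.esymm m
            = (((-1 : ℂ) ^ m * (-1 : ℂ) ^ m) * (L⁻¹ * L)) * p.roots.esymm m := by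
              rw [hsq, inv_mul_cancel₀ hL0]; ring
          _ = ((-1 : ℂ) ^ m * L⁻¹) * (L * ((-1 : ℂ) ^ m) * p.roots.esymm m) := by ring
          _ = ((-1 : ℂ) ^ m * L⁻¹) * p.coeff (d - m) := by rw [← hco]
      have hpc : p.coeff (d - m) = t.coeff (d - m) - (if m = d then w else 0) := by
        rw [hp, Polynomial.coeff_sub, Polynomial.coeff_C]
        congr 1
        by_cases h : m = d
        · rw [if_pos (by omega), if_pos h]
        · rw [if_neg (by omega), if_neg h]
      have hveval : (v i).eval w
          = ((-1 : ℂ) ^ m * L⁻¹) * (t.coeff (d - m) - (if m = d then w else 0)) := by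
        rw [hv]
        by_cases h : m = d <;> simp [← hm, h]
      rw [he, hveval, hpc]
    -- now the chain
    set Φ := (Fprod d n g).map (MvPolynomial.aeval r : MvPolynomial (Fin d) ℂ →ₐ[ℂ] ℂ).toRingHom
      with hΦ
    have hlhs : ((p.roots).map (fun z => MvPolynomial.eval ![z, Complex.exp w] P - c)).prod
        = Φ.eval (Complex.exp w) := by
      rw [← hr, Multiset.map_map]
      have h1 : (Multiset.map ((fun z => MvPolynomial.eval ![z, Complex.exp w] P - c) ∘ r)
          Finset.univ.val).prod
          = ∏ j : Fin d, (MvPolynomial.eval ![r j, Complex.exp w] P - c) := rfl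
      rw [h1, hΦ, Fprod, Polynomial.map_prod, Polynomial.eval_prod]
      refine Finset.prod_congr rfl fun j _ => ?_
      rw [hfact (r j) (Complex.exp w), Ffact, Polynomial.map_sum, Polynomial.eval_finset_sum]
      refine Finset.sum_congr rfl fun k _ => ?_
      rw [Polynomial.map_mul, Polynomial.map_pow, Polynomial.map_C, Polynomial.map_X,
        Polynomial.eval_mul, Polynomial.eval_pow, Polynomial.eval_C, Polynomial.eval_X]
      congr 1
      show (g k).eval (r j) = MvPolynomial.aeval r (Polynomial.aeval (MvPolynomial.X j) (g k))
      rw [← Polynomial.aeval_algHom_apply, MvPolynomial.aeval_X, ← Polynomial.coe_aeval_eq_eval]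
    have hΦdeg : Φ.natDegree < n * d + 1 := by
      refine Nat.lt_succ_of_le ?_
      exact (Polynomial.natDegree_map_le).trans (Fprod_natDegree_le d n g)
    have hcoeffΦ : ∀ K, Φ.coeff K = (MvPolynomial.aeval v (q K)).eval w := by
      intro K
      rw [hΦ, Polynomial.coeff_map]
      show MvPolynomial.aeval r ((Fprod d n g).coeff K) = _
      rw [← hq1 K]
      have h2 := DFunLike.congr_fun (MvPolynomial.comp_aeval
        (φ := (MvPolynomial.aeval r : MvPolynomial (Fin d) ℂ →ₐ[ℂ] ℂ))
        (f := fun i : Fin d => MvPolynomial.esymm (Fin d) ℂ ((i : ℕ) + 1))) (q K)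
      rw [AlgHom.comp_apply] at h2
      rw [h2]
      have h3 := DFunLike.congr_fun (MvPolynomial.comp_aeval
        (φ := (Polynomial.aeval w : Polynomial ℂ →ₐ[ℂ] ℂ)) (f := v)) (q K)
      rw [AlgHom.comp_apply] at h3
      rw [show (MvPolynomial.aeval v (q K)).eval w
          = Polynomial.aeval w (MvPolynomial.aeval v (q K)) from
          by rw [← Polynomial.coe_aeval_eq_eval], h3]
      have h4 : (fun i : Fin d => MvPolynomial.aeval r (MvPolynomial.esymm (Fin d) ℂ ((i : ℕ) + 1)))
          = fun i : Fin d => Polynomial.aeval w (v i) := by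
        funext i
        rw [MvPolynomial.aeval_esymm_eq_multiset_esymm, hr, hesymm i,
          ← Polynomial.coe_aeval_eq_eval]
      rw [h4]
    rw [hlhs, Polynomial.eval_eq_sum_range' hΦdeg]
    refine Finset.sum_congr rfl fun K hK => ?_
    rw [hcoeffΦ K, Complex.exp_nat_mul]
end

section
/- Let [a,b] ⊂ ℝ with a < b, and set r = (b−a)/2 and w = w(z) = z − (a+b)/2. There exists a constant C > 0, depending only on a and b, such that for every x ∈ [a,b], every 0 < s ≤ 1, every z ∈ ℂ with |z − x| ≤ s, and every ζ ∈ ℂ satisfying ζ + ζ^{−1} = 2w/r (equivalently, ζ = w/r ± √((w/r)² − 1)), one has |ζ| ≤ 1 + C√s. -/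
/-!
Write `u = w/r` and `y = (x - (a+b)/2)/r ∈ [-1, 1]`, and let `η = y + i√(1 - y²)`, a point of the
unit circle with real part `y`. Since `ζ² - 2uζ + 1 = 0` and `(ζ - η)(ζ - η̄) = ζ² - 2yζ + 1`,
`(‖ζ‖ - 1)² ≤ ‖ζ - η‖ ‖ζ - η̄‖ = 2‖ζ‖ ‖u - y‖ ≤ 2‖ζ‖ s/r`,
and this quadratic inequality forces `‖ζ‖ ≤ 1 + 2s/r + √(2s/r) = 1 + O(√s)`.
-/

open Complex ComplexConjugate

lemma sq_sub_two_mul_add_one_eq_zero_of_add_inv_eq {ζ u : ℂ} (hζ : ζ ≠ 0)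
    (h : ζ + ζ⁻¹ = 2 * u) :
    ζ ^ 2 - 2 * u * ζ + 1 = 0 := by
  field_simp at h
  linear_combination h

lemma sub_mul_sub_conj_of_norm_eq_one (ζ : ℂ) {η : ℂ} (hη : ‖η‖ = 1) :
    (ζ - η) * (ζ - conj η) = ζ ^ 2 - 2 * η.re * ζ + 1 := by
  have hsum : η + conj η = 2 * η.re := by rw [add_conj]; push_cast; ring
  have hprod : η * conj η = 1 := by rw [mul_conj, normSq_eq_norm_sq, hη]; norm_num
  linear_combination -ζ * hsum + hprod

lemma exists_norm_eq_one_re_eq {y : ℝ} (hy : |y| ≤ 1) : ∃ η : ℂ, ‖η‖ = 1 ∧ η.re = y := by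
  have hy2 : 0 ≤ 1 - y ^ 2 := by nlinarith [sq_abs y, abs_nonneg y]
  refine ⟨⟨y, √(1 - y ^ 2)⟩, ?_, rfl⟩
  rw [norm_def, normSq_mk, Real.mul_self_sqrt hy2, ← sq, add_sub_cancel, Real.sqrt_one]

lemma norm_sub_one_sq_le_of_quadratic {ζ u : ℂ} {y : ℝ} (hy : |y| ≤ 1)
    (h : ζ ^ 2 - 2 * u * ζ + 1 = 0) : (‖ζ‖ - 1) ^ 2 ≤ 2 * ‖ζ‖ * ‖u - y‖ := by
  obtain ⟨η, hη, rfl⟩ := exists_norm_eq_one_re_eq hy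
  have hfactor : (ζ - η) * (ζ - conj η) = 2 * ζ * (u - η.re) := by
    rw [sub_mul_sub_conj_of_norm_eq_one ζ hη]; linear_combination h
  have h₁ : |‖ζ‖ - 1| ≤ ‖ζ - η‖ := hη ▸ abs_norm_sub_norm_le ζ η
  have h₂ : |‖ζ‖ - 1| ≤ ‖ζ - conj η‖ := by
    simpa [hη] using abs_norm_sub_norm_le ζ (conj η)
  calc (‖ζ‖ - 1) ^ 2 = |‖ζ‖ - 1| * |‖ζ‖ - 1| := by rw [← sq_abs, sq]
    _ ≤ ‖ζ - η‖ * ‖ζ - conj η‖ := mul_le_mul h₁ h₂ (abs_nonneg _) (norm_nonneg _)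
    _ = 2 * ‖ζ‖ * ‖u - η.re‖ := by rw [← norm_mul, hfactor, norm_mul, norm_mul]; norm_num

lemma le_one_add_of_sub_one_sq_le {t δ : ℝ} (hδ : 0 ≤ δ) (h : (t - 1) ^ 2 ≤ 2 * t * δ) :
    t ≤ 1 + 2 * δ + √(2 * δ) := by
  set q := √(2 * δ)
  have hq : q ^ 2 = 2 * δ := Real.sq_sqrt (by positivity)
  have hq0 : 0 ≤ q := Real.sqrt_nonneg _
  nlinarith

lemma two_mul_div_add_sqrt_le {r s : ℝ} (hr : 0 < r) (hs : 0 ≤ s) (hs1 : s ≤ 1) :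
    2 * (s / r) + √(2 * (s / r)) ≤ (2 / r + √(2 / r)) * √s := by
  have hs_le : s ≤ √s := Real.le_sqrt_of_sq_le (by nlinarith)
  have hsqrt : √(2 * (s / r)) = √(2 / r) * √s := by
    rw [← Real.sqrt_mul (by positivity)]; ring_nf
  rw [hsqrt, add_mul, mul_div_assoc', div_mul_eq_mul_div]
  gcongr

/-- (cf. Lemma 1.1 of [BLMT1].) With `r = (b-a)/2` and
`w = z - (a+b)/2`: there is a constant `C = C(a,b) > 0` such that for every `x ∈ [a,b]`,
`0 < s ≤ 1`, `z` with `|z - x| ≤ s`, and every solution `ζ` of the Joukowski equation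
`ζ + ζ⁻¹ = 2w/r`, one has `|ζ| ≤ 1 + C√s`. -/
theorem joukowski_bound_near_interval (a b : ℝ) (hab : a < b) :
    ∃ C > (0 : ℝ), ∀ x ∈ Set.Icc a b, ∀ s : ℝ, 0 < s → s ≤ 1 →
      ∀ z : ℂ, ‖z - (x : ℂ)‖ ≤ s →
      ∀ ζ : ℂ,
        ζ + ζ⁻¹ = 2 * (z - (((a + b) / 2 : ℝ) : ℂ)) / (((b - a) / 2 : ℝ) : ℂ) →
        ‖ζ‖ ≤ 1 + C * Real.sqrt s := by
  set c := (a + b) / 2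
  set r := (b - a) / 2
  have hr : 0 < r := by simp only [r]; linarith
  refine ⟨2 / r + √(2 / r), by positivity, fun x hx s hs hs1 z hz ζ hζ => ?_⟩
  obtain rfl | hζ0 := eq_or_ne ζ 0
  · rw [norm_zero]; positivity
  have hy : |(x - c) / r| ≤ 1 := by
    rw [abs_div, abs_of_pos hr, div_le_one hr, abs_le]
    constructor <;> simp only [c, r] <;> linarith [hx.1, hx.2]
  have hdist : ‖(z - c) / r - ((x - c) / r : ℝ)‖ ≤ s / r := by
    rw [ofReal_div (x - c), ofReal_sub x, div_sub_div_same, sub_sub_sub_cancel_right, norm_div,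
      norm_real, Real.norm_of_nonneg hr.le]
    gcongr
  have hquad := sq_sub_two_mul_add_one_eq_zero_of_add_inv_eq hζ0 (by rw [hζ, mul_div_assoc])
  have hsq := (norm_sub_one_sq_le_of_quadratic hy hquad).trans
    (mul_le_mul_of_nonneg_left hdist (by positivity))
  calc ‖ζ‖ ≤ 1 + (2 * (s / r) + √(2 * (s / r))) := by
        rw [← add_assoc]; exact le_one_add_of_sub_one_sq_le (by positivity) hsq
    _ ≤ 1 + (2 / r + √(2 / r)) * √s := by gcongr; exact two_mul_div_add_sqrt_le hr hs.le hs1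
end
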